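/- arXiv:1801.08910 — 10 statements merged into one kernel-verified Lean document; each statement's English description precedes it below -/
import Mathlib

section
/- If G is a graph on n vertices in which every set of Z(G) vertices is a zero forcing set (i.e., z(G;Z(G)) = C(n, Z(G))), then G is the complete graph K_n or the empty graph on n vertices. -/
/-- The set of vertices eventually colored ("forced") by the zero forcing process
starting from the initially colored set `S`: a colored vertex with exactly one
uncolored neighbor forces that neighbor to become colored. -/
inductive SimpleGraph.Forced {V : Type*} (G : SimpleGraph V) (S : Set V) : V → Prop
  | mem {v : V} : v ∈ S → G.Forced S v
  | force {u v : V} : G.Adj u v → G.Forced S u →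
      (∀ w, G.Adj u w → w ≠ v → G.Forced S w) → G.Forced S v

/-- `S` is a zero forcing set of `G` if the zero forcing process starting from `S`
colors every vertex. -/
def SimpleGraph.IsZeroForcingSet {V : Type*} (G : SimpleGraph V) (S : Set V) : Prop :=
  ∀ v, G.Forced S v

/-- `z(G;i)`: the number of zero forcing sets of `G` of size `i`. -/
noncomputable def SimpleGraph.zcount {V : Type*} [Fintype V] (G : SimpleGraph V) (i : ℕ) : ℕ :=
  Nat.card {S : Finset V // S.card = i ∧ G.IsZeroForcingSet ↑S}

/-- `Z(G)`: the zero forcing number, the minimum size of a zero forcing set. -/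
noncomputable def SimpleGraph.zfNumber {V : Type*} [Fintype V] (G : SimpleGraph V) : ℕ :=
  sInf {i | ∃ S : Finset V, S.card = i ∧ G.IsZeroForcingSet ↑S}

/-- The zero forcing polynomial `𝒵(G;x) = ∑_{i=1}^n z(G;i) x^i`. -/
noncomputable def SimpleGraph.zfPoly {V : Type*} [Fintype V] (G : SimpleGraph V) : Polynomial ℤ :=
  ∑ i ∈ Finset.Icc 1 (Fintype.card V), Polynomial.C (G.zcount i : ℤ) * Polynomial.X ^ i

/-- The path `P_n` on `n` vertices. -/
def pathG (n : ℕ) : SimpleGraph (Fin n) :=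
  SimpleGraph.fromRel (fun i j => (i : ℕ) + 1 = j)

/-- The cycle `C_n` on `n` vertices. -/
def cycleG (n : ℕ) : SimpleGraph (Fin n) :=
  SimpleGraph.fromRel (fun i j => ((i : ℕ) + 1) % n = j)

open Finset

namespace ZFAux

variable {V : Type*} [Fintype V] {G : SimpleGraph V}

lemma forced_exists_adj_of_not_mem {S : Set V} {v : V}
    (h : G.Forced S v) (hv : v ∉ S) : ∃ u, G.Adj v u := by
  cases h with
  | mem h => exact absurd h hv
  | force hadj hu hall => exact ⟨_, hadj.symm⟩

/-- If `C` is a "fort" (no vertex outside `C` has exactly one neighbor in `C`)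
disjoint from `S`, then nothing in `C` is ever forced from `S`. -/
lemma fort_block (C : Finset V) (S : Set V)
    (hfort : ∀ x y, G.Adj x y → y ∈ C → x ∉ C → ∃ y' ∈ C, G.Adj x y' ∧ y' ≠ y)
    (hdisj : ∀ x ∈ C, x ∉ S) : ∀ v, G.Forced S v → v ∉ C := by
  intro v h
  induction h with
  | mem h => exact fun hC => hdisj _ hC h
  | force hadj hu hall ihu ihall =>
    intro hwC
    obtain ⟨y', hy'C, hy'adj, hy'ne⟩ := hfort _ _ hadj hwC ihu
    exact ihall y' hy'adj hy'ne hy'C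

lemma zf_le_of_zfs {S : Finset V} (h : G.IsZeroForcingSet ↑S) :
    G.zfNumber ≤ S.card := Nat.sInf_le ⟨S, rfl, h⟩

lemma all_of_zcount (h : G.zcount G.zfNumber = (Fintype.card V).choose G.zfNumber) :
    ∀ S : Finset V, S.card = G.zfNumber → G.IsZeroForcingSet ↑S := by
  classical
  intro S hS
  by_contra hzf
  set k := G.zfNumber with hk
  have hA : G.zcount k =
      (univ.filter (fun S : Finset V => S.card = k ∧ G.IsZeroForcingSet ↑S)).card := by
    rw [SimpleGraph.zcount, Nat.card_eq_fintype_card, Fintype.card_subtype]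
  have hB : (univ.filter (fun S : Finset V => S.card = k)).card =
      (Fintype.card V).choose k := by
    rw [← Fintype.card_subtype, Fintype.card_finset_len]
  have hsub : (univ.filter (fun S : Finset V => S.card = k ∧ G.IsZeroForcingSet ↑S)) ⊆
      univ.filter (fun S : Finset V => S.card = k) := by
    intro T hT
    simp only [mem_filter] at *
    exact ⟨hT.1, hT.2.1⟩
  have heq := eq_of_subset_of_card_le hsub (by rw [hB, ← h, hA])
  have hmem : S ∈ univ.filter (fun S : Finset V => S.card = k) := by simp [hS]
  rw [← heq] at hmem
  simp only [mem_filter] at hmem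
  exact hzf hmem.2.2

lemma zf_lt_of_adj {u v : V} (h : G.Adj u v) : G.zfNumber < Fintype.card V := by
  classical
  have hzfs : G.IsZeroForcingSet ↑(univ.erase v) := by
    intro x
    by_cases hx : x = v
    · subst hx
      refine SimpleGraph.Forced.force h (SimpleGraph.Forced.mem ?_)
        (fun w hw hne => SimpleGraph.Forced.mem ?_)
      · simp [h.ne]
      · simp [hne]
    · exact SimpleGraph.Forced.mem (by simp [hx])
  have h1 := zf_le_of_zfs hzfs
  have hv : (univ.erase v).card = Fintype.card V - 1 := by simp
  have hn : 0 < Fintype.card V := Fintype.card_pos_iff.mpr ⟨v⟩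
  omega

/-- Key lemma: if every `Z(G)`-set forces, then no set of size `Z(G)-1` can force
anything outside itself. -/
lemma no_force_small
    (hall : ∀ S : Finset V, S.card = G.zfNumber → G.IsZeroForcingSet ↑S)
    {T : Finset V} (hT : T.card + 1 = G.zfNumber) {w : V} (hw : w ∉ T)
    (hf : G.Forced ↑T w) : False := by
  classical
  set k := G.zfNumber with hk
  by_cases hZ : ∀ x, G.Forced ↑T x
  · have := zf_le_of_zfs (S := T) hZ
    omega
  · push_neg at hZ
    obtain ⟨z, hz⟩ := hZ
    set cl := univ.filter (fun x => G.Forced ↑T x) with hcl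
    have hTcl : T ⊆ cl := fun x hx => by
      simp only [hcl, mem_filter, mem_univ, true_and]
      exact SimpleGraph.Forced.mem (Finset.mem_coe.mpr hx)
    have hwcl : w ∈ cl := by simp [hcl, hf]
    have hcard : k ≤ cl.card := by
      have h1 : insert w T ⊆ cl := insert_subset hwcl hTcl
      have h2 := card_le_card h1
      rw [card_insert_of_notMem hw] at h2
      omega
    obtain ⟨S, hScl, hScard⟩ := exists_subset_card_eq hcard
    have hSzfs := hall S hScard
    set C := univ.filter (fun x => ¬ G.Forced ↑T x) with hC
    have hzC : z ∈ C := by simp [hC, hz]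
    have hfort : ∀ x y, G.Adj x y → y ∈ C → x ∉ C → ∃ y' ∈ C, G.Adj x y' ∧ y' ≠ y := by
      intro x y hadj hyC hxC
      by_contra hcon
      push_neg at hcon
      have hx : G.Forced ↑T x := by
        by_contra hnx
        exact hxC (by simp [hC, hnx])
      have hally : ∀ w', G.Adj x w' → w' ≠ y → G.Forced ↑T w' := by
        intro w' hw' hne
        by_contra hnf
        exact hne (hcon w' (by simp [hC, hnf]) hw')
      have hy : G.Forced ↑T y := SimpleGraph.Forced.force hadj hx hally
      simp [hC, hy] at hyC
    have hdisj : ∀ x ∈ C, x ∉ (↑S : Set V) := by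
      intro x hxC hxS
      have hx1 : x ∈ cl := hScl (by simpa using hxS)
      simp only [hcl, mem_filter, mem_univ, true_and] at hx1
      simp only [hC, mem_filter, mem_univ, true_and] at hxC
      exact hxC hx1
    exact (fort_block C ↑S hfort hdisj z (hSzfs z)) hzC

open scoped Classical in
lemma deg_ge (hall : ∀ S : Finset V, S.card = G.zfNumber → G.IsZeroForcingSet ↑S)
    (hlt : G.zfNumber < Fintype.card V) (v : V) :
    G.zfNumber ≤ (G.neighborFinset v).card := by
  classical
  set k := G.zfNumber with hk
  by_contra hdeg
  push_neg at hdeg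
  have hnb : ∃ w, G.Adj v w := by
    have hcv : (univ.erase v).card = Fintype.card V - 1 := by simp
    obtain ⟨S, hS, hcard⟩ := exists_subset_card_eq (s := univ.erase v) (n := k) (by omega)
    have hf := hall S hcard v
    have hvS : v ∉ (↑S : Set V) := by
      intro hv
      have h2 := hS (by simpa using hv)
      simp at h2
    exact forced_exists_adj_of_not_mem hf hvS
  obtain ⟨w, hw⟩ := hnb
  have hwv : w ≠ v := hw.ne'
  have hwnb : w ∈ G.neighborFinset v := by simpa using hw
  have hdpos : 0 < (G.neighborFinset v).card := card_pos.mpr ⟨w, hwnb⟩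
  set B := insert v ((G.neighborFinset v).erase w) with hB
  have hvB : v ∉ (G.neighborFinset v).erase w := by simp
  have hBcard : B.card = (G.neighborFinset v).card := by
    rw [hB, card_insert_of_notMem hvB, card_erase_of_mem hwnb]
    omega
  have hBsub : B ⊆ univ.erase w := by
    intro x hx
    rcases mem_insert.mp hx with rfl | hx
    · simp [hwv.symm]
    · simp [(mem_erase.mp hx).1]
  have hcerase : (univ.erase w).card = Fintype.card V - 1 := by simp
  obtain ⟨T, hBT, hTsub, hTcard⟩ := exists_subsuperset_card_eq (n := k - 1 - B.card + B.card)
    hBsub (by omega) (by omega)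
  have hTk : T.card + 1 = k := by omega
  have hwT : w ∉ T := fun hwt => by simpa using hTsub hwt
  have hfw : G.Forced ↑T w := by
    refine SimpleGraph.Forced.force hw (SimpleGraph.Forced.mem ?_) ?_
    · exact Finset.mem_coe.mpr (hBT (mem_insert_self _ _))
    · intro x hx hne
      refine SimpleGraph.Forced.mem (Finset.mem_coe.mpr (hBT ?_))
      exact mem_insert_of_mem (mem_erase.mpr ⟨hne, by simpa using hx⟩)
  exact no_force_small hall hTk hwT hfw

end ZFAux
/-- If every set of `Z(G)` vertices is a zero forcing set, i.e.
`z(G;Z(G)) = C(n, Z(G))`, then `G` is complete or empty. -/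
theorem complete_or_empty_of_zcount_eq_choose {V : Type*} [Fintype V] (G : SimpleGraph V)
    (h : G.zcount G.zfNumber = (Fintype.card V).choose G.zfNumber) :
    G = ⊤ ∨ G = ⊥ := by
  classical
  by_cases hE : ∃ u v, G.Adj u v
  · left
    obtain ⟨u₀, v₀, he⟩ := hE
    have hall := ZFAux.all_of_zcount h
    have hlt := ZFAux.zf_lt_of_adj he
    set k := G.zfNumber with hk
    set n := Fintype.card V with hn
    have hdeg := ZFAux.deg_ge hall hlt
    ext a b
    simp only [SimpleGraph.top_adj]
    constructor
    · exact fun h' => h'.ne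
    · intro hne
      by_contra hnadj
      -- basic degree facts
      set Hnb : V → Finset V := fun x => (Finset.univ.erase x) \ G.neighborFinset x with hHnb
      have hmemH : ∀ x y : V, y ∈ Hnb x ↔ y ≠ x ∧ ¬ G.Adj x y := by
        intro x y
        simp [hHnb, Finset.mem_sdiff, Finset.mem_erase]
      have hnfsub : ∀ x : V, G.neighborFinset x ⊆ Finset.univ.erase x := by
        intro x y hy
        simp only [SimpleGraph.mem_neighborFinset] at hy
        simp [hy.ne']
      have hcardH : ∀ x : V, (Hnb x).card + (G.neighborFinset x).card + 1 = n := by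
        intro x
        have h1 := Finset.card_sdiff_of_subset (hnfsub x)
        have h2 := Finset.card_le_card (hnfsub x)
        have h3 : (Finset.univ.erase x).card = n - 1 := by simp [hn]
        have h4 : 0 < n := Fintype.card_pos_iff.mpr ⟨x⟩
        simp only [hHnb]
        omega
      -- k ≤ n - 2
      have hka : (G.neighborFinset a).card + 2 ≤ n := by
        have hsub : G.neighborFinset a ⊆ (Finset.univ.erase a).erase b := by
          intro x hx
          simp only [SimpleGraph.mem_neighborFinset] at hx
          have hxb : x ≠ b := by rintro rfl; exact hnadj hx
          simp [hxb, hx.ne']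
        have h1 := Finset.card_le_card hsub
        have hba : b ∈ Finset.univ.erase a := by simp [hne.symm] -- b ≠ a
        have h2 : ((Finset.univ.erase a).erase b).card = (Finset.univ.erase a).card - 1 :=
          Finset.card_erase_of_mem hba
        have h3 : (Finset.univ.erase a).card = n - 1 := by simp [hn]
        have h4 : 0 < n := Fintype.card_pos_iff.mpr ⟨a⟩
        have h5 : 0 < (Finset.univ.erase a).card := Finset.card_pos.mpr ⟨b, hba⟩
        omega
      have hkn2 : k + 2 ≤ n := le_trans (by have := hdeg a; omega) hka
      -- maximizer of complement degree
      obtain ⟨v, -, hvmax⟩ := Finset.exists_max_image Finset.univ (fun x => (Hnb x).card)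
        ⟨a, Finset.mem_univ a⟩
      -- construct a fort C with |C| ≤ n - k
      obtain ⟨C, hCne, hCle, hfort⟩ : ∃ C : Finset V, C.Nonempty ∧ C.card + k ≤ n ∧
          (∀ x y, G.Adj x y → y ∈ C → x ∉ C → ∃ y' ∈ C, G.Adj x y' ∧ y' ≠ y) := by
        by_cases htwin : ∃ u, G.Adj u v ∧ Hnb u = Hnb v
        · obtain ⟨u, huv, hHuv⟩ := htwin
          refine ⟨{u, v}, ⟨u, by simp⟩, ?_, ?_⟩
          · have : ({u, v} : Finset V).card ≤ 2 :=
              le_trans (Finset.card_insert_le _ _) (by simp)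
            omega
          · intro x y hadj hyC hxC
            simp only [Finset.mem_insert, Finset.mem_singleton] at hyC hxC
            push_neg at hxC
            obtain ⟨hxu, hxv⟩ := hxC
            have hiff : G.Adj u x ↔ G.Adj v x := by
              constructor
              · intro hux
                have hx1 : x ∉ Hnb u := by
                  simp only [hmemH]
                  push_neg
                  intro _; exact hux
                rw [hHuv] at hx1
                simp only [hmemH] at hx1
                push_neg at hx1
                exact hx1 hxv
              · intro hvx
                have hx1 : x ∉ Hnb v := by
                  simp only [hmemH]
                  push_neg
                  intro _; exact hvx
                rw [← hHuv] at hx1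
                simp only [hmemH] at hx1
                push_neg at hx1
                exact hx1 hxu
            rcases hyC with rfl | rfl
            · exact ⟨v, by simp, (hiff.mp hadj.symm).symm, huv.ne'⟩
            · exact ⟨u, by simp, (hiff.mpr hadj.symm).symm, huv.ne⟩
        · refine ⟨insert v (Hnb v), ⟨v, Finset.mem_insert_self _ _⟩, ?_, ?_⟩
          · have hvH : v ∉ Hnb v := by simp [hmemH]
            have h1 : (insert v (Hnb v)).card = (Hnb v).card + 1 :=
              Finset.card_insert_of_notMem hvH
            have h2 := hcardH v
            have h3 := hdeg v
            omega
          · intro x y hadj hyC hxC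
            by_contra hcon
            push_neg at hcon
            have hxv : x ≠ v := fun hx => hxC (hx ▸ Finset.mem_insert_self _ _)
            have hxH : x ∉ Hnb v := fun hx => hxC (Finset.mem_insert_of_mem hx)
            have hvadjx : G.Adj v x := by
              simp only [hmemH] at hxH
              push_neg at hxH
              exact hxH hxv
            have hyv : v = y := hcon v (Finset.mem_insert_self _ _) hvadjx.symm
            have hsub : Hnb v ⊆ Hnb x := by
              intro z hz
              have hz' := (hmemH v z).mp hz
              have hzx : z ≠ x := fun hzx => hxH (hzx ▸ hz)
              have hznadj : ¬ G.Adj x z := by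
                intro hxz
                have := hcon z (Finset.mem_insert_of_mem hz) hxz
                exact hz'.1 (this ▸ hyv.symm ▸ rfl)
              exact (hmemH x z).mpr ⟨hzx, hznadj⟩
            have heq := Finset.eq_of_subset_of_card_le hsub (hvmax x (Finset.mem_univ x))
            exact htwin ⟨x, hvadjx.symm, heq.symm⟩
      -- a k-set avoiding the fort C fails to force, contradiction
      have hcardC : k ≤ (Finset.univ \ C).card := by
        have h1 := Finset.card_sdiff_of_subset (Finset.subset_univ C)
        have h2 : (Finset.univ : Finset V).card = n := by simp [hn]
        omega
      obtain ⟨S, hSsub, hScard⟩ := Finset.exists_subset_card_eq hcardC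
      have hSzfs := hall S hScard
      obtain ⟨w₀, hw₀⟩ := hCne
      have hdisj : ∀ x ∈ C, x ∉ (↑S : Set V) := by
        intro x hxC hxS
        have h1 := hSsub (by simpa using hxS)
        simp only [Finset.mem_sdiff] at h1
        exact h1.2 hxC
      exact (ZFAux.fort_block C ↑S hfort hdisj w₀ (hSzfs w₀)) hw₀
  · right
    push_neg at hE
    ext a b
    simp only [SimpleGraph.bot_adj]
    exact iff_of_false (hE a b) not_false
end

section
/- For n ≥ 2, the zero forcing polynomial of the complete graph K_n is Z(K_n; x) = x^n + n·x^{n-1}. -/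
/-!
In `K_n` a colored vertex `u` is adjacent to every other vertex, so it can force only when all
vertices but one are colored. Hence a set whose complement has two or more vertices is closed
under forcing, while one whose complement has at most one vertex (and which is nonempty, as
`n ≥ 2`) forces the rest in one step. The zero forcing sets are thus the `n` sets of size `n - 1`
and `V`.
-/

namespace SimpleGraph

variable {V : Type*}

theorem Forced.mem_of_forcingClosed {G : SimpleGraph V} {S T : Set V} (hST : S ⊆ T)
    (hT : ∀ u v, G.Adj u v → u ∈ T → (∀ w, G.Adj u w → w ≠ v → w ∈ T) → v ∈ T)
    {v : V} (hv : G.Forced S v) : v ∈ T := by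
  induction hv with
  | mem hv => exact hST hv
  | force hadj _ _ ihu ihw => exact hT _ _ hadj ihu ihw

theorem forced_top_mem_of_nontrivial_compl {S : Set V} (hS : Sᶜ.Nontrivial) {v : V}
    (hv : (⊤ : SimpleGraph V).Forced S v) : v ∈ S := by
  refine Forced.mem_of_forcingClosed subset_rfl (fun u y _ hu hothers => ?_) hv
  obtain ⟨x, hx, hxy⟩ := hS.exists_ne y
  exact absurd (hothers x ((top_adj _ _).mpr (ne_of_mem_of_not_mem hu hx)) hxy) hx

theorem isZeroForcingSet_top_iff [Nontrivial V] {S : Set V} :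
    (⊤ : SimpleGraph V).IsZeroForcingSet S ↔ Sᶜ.Subsingleton := by
  constructor
  · intro hS
    by_contra hnt
    have hnt := Set.not_subsingleton_iff.mp hnt
    obtain ⟨a, ha⟩ := hnt.nonempty
    exact ha (forced_top_mem_of_nontrivial_compl hnt (hS a))
  · intro hS v
    by_cases hv : v ∈ S
    · exact .mem hv
    · have h_in : ∀ w, w ≠ v → w ∈ S := fun w hwv => by_contra fun hw => hwv (hS hw hv)
      obtain ⟨u, huv⟩ := exists_ne v
      exact .force ((top_adj _ _).mpr huv) (.mem (h_in u huv)) fun w _ hwv => .mem (h_in w hwv)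

theorem zcount_top [Fintype V] [Nontrivial V] (i : ℕ) :
    (⊤ : SimpleGraph V).zcount i =
      if Fintype.card V ≤ i + 1 then (Fintype.card V).choose i else 0 := by
  classical
  have hzfs : ∀ S : Finset V,
      (⊤ : SimpleGraph V).IsZeroForcingSet ↑S ↔ Fintype.card V ≤ S.card + 1 := fun S => by
    rw [isZeroForcingSet_top_iff, ← Finset.coe_compl, ← Finset.card_le_one_iff_subsingleton,
      Finset.card_compl]
    have := S.card_le_univ
    omega
  unfold zcount
  split_ifs with hi
  · have hS : ∀ S : Finset V,
        (S.card = i ∧ (⊤ : SimpleGraph V).IsZeroForcingSet ↑S) ↔ S.card = i := fun S => by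
      rw [hzfs]
      exact ⟨And.left, fun h => ⟨h, h ▸ hi⟩⟩
    rw [Nat.card_congr (Equiv.subtypeEquivRight hS), Nat.card_eq_fintype_card,
      Fintype.card_finset_len]
  · rw [Nat.card_eq_zero]
    exact .inl ⟨fun ⟨S, hcard, hS⟩ => hi (hcard ▸ (hzfs S).mp hS)⟩

end SimpleGraph

/-- For `n ≥ 2`, `𝒵(K_n;x) = x^n + n x^{n-1}`. -/
theorem zfPoly_completeGraph (n : ℕ) (hn : 2 ≤ n) :
    (⊤ : SimpleGraph (Fin n)).zfPoly =
      Polynomial.X ^ n + Polynomial.C (n : ℤ) * Polynomial.X ^ (n - 1) := by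
  have : Nontrivial (Fin n) := Fin.nontrivial_iff_two_le.mpr hn
  have hsupp : ({n - 1, n} : Finset ℕ) ⊆ Finset.Icc 1 n := by
    intro i hi
    simp only [Finset.mem_insert, Finset.mem_singleton] at hi
    simp only [Finset.mem_Icc]
    omega
  unfold SimpleGraph.zfPoly
  simp only [SimpleGraph.zcount_top, Fintype.card_fin]
  rw [← Finset.sum_subset hsupp, Finset.sum_pair (by omega)]
  · rw [if_pos (by omega), if_pos (by omega), Nat.choose_self, Nat.choose_symm (by omega : 1 ≤ n),
      Nat.choose_one_right]
    push_cast
    rw [Polynomial.C_1, one_mul, add_comm]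
  · intro i hi hi_supp
    simp only [Finset.mem_insert, Finset.mem_singleton, Finset.mem_Icc] at hi hi_supp
    rw [if_neg (by omega), Nat.cast_zero, Polynomial.C_0, zero_mul]
end

section
/- For n ≥ 1, the number of zero forcing sets of the path P_n of size i equals C(n,i) − C(n−i−1, i), for each 1 ≤ i ≤ n (with the convention C(a,b)=0 when 0 ≤ a < b). -/
/-!
On a path, a set containing an endpoint or two adjacent vertices forces everything: two
consecutive colored vertices keep forcing along the path in both directions. Conversely, if the
set avoids both endpoints and has no two adjacent vertices, every colored vertex has two uncolored
neighbors, so nothing is ever forced. The non-forcing `i`-sets are therefore the `i`-subsets of the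
`n - 2` inner vertices with no two consecutive; there are `C(n - i - 1, i)` of them, by the Pascal
recurrence obtained from whether the largest inner vertex is chosen.
-/

open Finset

def NoConsecutive (s : Finset ℕ) : Prop := ∀ a ∈ s, a + 1 ∉ s

instance : DecidablePred NoConsecutive := fun _ => Finset.decidableDforallFinset

@[simp] theorem noConsecutive_empty : NoConsecutive ∅ := fun _ h => absurd h (notMem_empty _)

theorem NoConsecutive.mono {s t : Finset ℕ} (h : t ⊆ s) (hs : NoConsecutive s) :
    NoConsecutive t :=
  fun a ha ha1 => hs a (h ha) (h ha1)

theorem NoConsecutive.insert {s : Finset ℕ} {b : ℕ} (hs : NoConsecutive s)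
    (hb : ∀ x ∈ s, x + 1 < b) : NoConsecutive (insert b s) := by
  intro x hx hx1
  rw [mem_insert] at hx hx1
  rcases hx with rfl | hx
  · rcases hx1 with h | h
    · omega
    · have := hb _ h; omega
  · rcases hx1 with h | h
    · have := hb _ hx; omega
    · exact hs x hx h

theorem card_noConsecutive_Ioo_add_two (a m i : ℕ) :
    #{s ∈ (Ioo a (a + m + 2)).powersetCard (i + 1) | NoConsecutive s} =
      #{s ∈ (Ioo a (a + m + 1)).powersetCard (i + 1) | NoConsecutive s} +
        #{s ∈ (Ioo a (a + m)).powersetCard i | NoConsecutive s} := by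
  set top := a + m + 1
  have hIoo : Ioo a (a + m + 2) = insert top (Ioo a top) := by
    rw [show a + m + 2 = top + 1 by omega, Ioo_add_one_right_eq_Ioc,
      Ioo_insert_right (by omega)]
  -- split on whether `top` is chosen; if it is, `top - 1` is not
  rw [← card_filter_add_card_filter_not (p := (top ∈ ·)), add_comm, filter_filter,
    filter_filter]
  congr 1
  · congr 1
    ext s
    simp only [mem_filter, mem_powersetCard, hIoo]
    constructor
    · rintro ⟨⟨hs, hc⟩, hn, ht⟩
      exact ⟨⟨(subset_insert_iff_of_notMem ht).1 hs, hc⟩, hn⟩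
    · rintro ⟨⟨hs, hc⟩, hn⟩
      exact ⟨⟨hs.trans (subset_insert _ _), hc⟩, hn, fun h => by simpa using hs h⟩
  · refine card_nbij' (·.erase top) (insert top) ?_ ?_ ?_ ?_
    · intro s hs
      simp only [mem_coe, mem_filter, mem_powersetCard, hIoo] at hs ⊢
      obtain ⟨⟨hsub, hc⟩, hn, ht⟩ := hs
      refine ⟨⟨fun x hx => ?_, by rw [card_erase_of_mem ht, hc]; rfl⟩,
        hn.mono (erase_subset _ _)⟩
      have hx' := mem_of_mem_erase hx
      have : x ≠ a + m := fun e => hn x hx' (e ▸ ht)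
      have := hsub hx'
      simp only [mem_insert, mem_Ioo, top] at this ⊢
      have := ne_of_mem_erase hx
      omega
    · intro s hs
      simp only [mem_coe, mem_filter, mem_powersetCard, hIoo] at hs ⊢
      obtain ⟨⟨hsub, hc⟩, hn⟩ := hs
      have hlt : ∀ x ∈ s, x < a + m := fun x hx => (mem_Ioo.1 (hsub hx)).2
      have htop : top ∉ s := fun h => by have := hlt _ h; omega
      refine ⟨⟨insert_subset_insert _ (hsub.trans (Ioo_subset_Ioo_right (by omega))),
        by rw [card_insert_of_notMem htop, hc]⟩, hn.insert fun x hx => ?_, mem_insert_self _ _⟩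
      have := hlt x hx; omega
    · intro s hs
      simp only [mem_coe, mem_filter] at hs
      exact insert_erase hs.2.2
    · intro s hs
      simp only [mem_coe, mem_filter, mem_powersetCard] at hs
      exact erase_insert fun h => by simpa [top] using hs.1.1 h

theorem card_noConsecutive_Ioo (a m i : ℕ) :
    #{s ∈ (Ioo a (a + m)).powersetCard i | NoConsecutive s} = (m - i).choose i := by
  induction m using Nat.twoStepInduction generalizing i with
  | zero => cases i <;> simp [filter_singleton]
  | one => cases i <;> simp [filter_singleton, show Ioo a (a + 1) = ∅ by ext; simp]
  | more m ih₀ ih₁ =>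
    cases i with
    | zero => simp [filter_singleton]
    | succ i =>
      simp only [← add_assoc] at ih₁
      rw [← add_assoc, card_noConsecutive_Ioo_add_two, ih₁, ih₀]
      rcases le_or_gt i m with h | h
      · rw [show m + 2 - (i + 1) = (m - i) + 1 by omega, show m + 1 - (i + 1) = m - i by omega,
          Nat.choose_succ_succ, add_comm]
      · obtain ⟨j, rfl⟩ : ∃ j, i = j + 1 := ⟨i - 1, by omega⟩
        simp [show m + 2 - (j + 2) = 0 by omega, show m + 1 - (j + 2) = 0 by omega,
          show m - (j + 1) = 0 by omega]

theorem filter_powersetCard_subset_and {α : Type*} [DecidableEq α] {s t : Finset α} (h : t ⊆ s)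
    (i : ℕ) (p : Finset α → Prop) [DecidablePred p] :
    {u ∈ s.powersetCard i | u ⊆ t ∧ p u} = {u ∈ t.powersetCard i | p u} := by
  ext u
  simp only [mem_filter, mem_powersetCard]
  exact ⟨fun ⟨⟨_, hc⟩, ht, hp⟩ => ⟨⟨ht, hc⟩, hp⟩,
    fun ⟨⟨ht, hc⟩, hp⟩ => ⟨⟨ht.trans h, hc⟩, ht, hp⟩⟩

theorem card_filter_powersetCard_map_valEmbedding (n i : ℕ) (p : Finset ℕ → Prop) [DecidablePred p] :
    #{S ∈ (univ : Finset (Fin n)).powersetCard i | p (S.map Fin.valEmbedding)} =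
      #{t ∈ (Iio n).powersetCard i | p t} := by
  rw [← Fin.map_valEmbedding_univ, powersetCard_map, filter_map, card_map]
  rfl

namespace pathG

variable {n : ℕ}

theorem adj_iff {u v : Fin n} : (pathG n).Adj u v ↔ (u : ℕ) + 1 = v ∨ (v : ℕ) + 1 = u := by
  simp only [pathG, SimpleGraph.fromRel_adj, ne_eq, Fin.ext_iff]
  omega

/-- Indices `k ≥ n` count as forced, so that the propagation lemmas have no boundary cases. -/
def ForcedAt (n : ℕ) (S : Set (Fin n)) (k : ℕ) : Prop :=
  ∀ hk : k < n, (pathG n).Forced S ⟨k, hk⟩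

variable {S : Set (Fin n)} {k : ℕ}

theorem forcedAt_of_mem {v : Fin n} (hv : v ∈ S) : ForcedAt n S v :=
  fun _ => .mem hv

theorem forcedAt_of_ge (hk : n ≤ k) : ForcedAt n S k :=
  fun h => absurd h (by omega)

theorem ForcedAt.succ (hk : ForcedAt n S k) (hpred : ForcedAt n S (k - 1)) :
    ForcedAt n S (k + 1) := by
  intro hk1
  refine .force (u := ⟨k, by omega⟩) (adj_iff.2 (.inl rfl)) (hk _) fun w hw hne => ?_
  have : (w : ℕ) ≠ k + 1 := fun h => hne (Fin.ext h)
  have hw' : (w : ℕ) = k - 1 := by rw [adj_iff] at hw; simp only at hw; omega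
  have : w = ⟨k - 1, by omega⟩ := Fin.ext hw'
  exact this ▸ hpred _

theorem ForcedAt.pred (hk : k + 1 < n) (h₁ : ForcedAt n S (k + 1)) (h₂ : ForcedAt n S (k + 2)) :
    ForcedAt n S k := by
  intro hk0
  refine .force (u := ⟨k + 1, hk⟩) (adj_iff.2 (.inr rfl)) (h₁ _) fun w hw hne => ?_
  have : (w : ℕ) ≠ k := fun h => hne (Fin.ext h)
  have hw' : (w : ℕ) = k + 2 := by rw [adj_iff] at hw; simp only at hw; omega
  have : w = ⟨k + 2, by omega⟩ := Fin.ext hw'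
  exact this ▸ h₂ _

theorem forcedAt_of_consecutive {j : ℕ} (hj : j < n) (h₀ : ForcedAt n S j)
    (h₁ : ForcedAt n S (j + 1)) (m : ℕ) : ForcedAt n S m := by
  have up : ∀ d, ForcedAt n S (j + d) ∧ ForcedAt n S (j + d + 1) := by
    intro d
    induction d with
    | zero => exact ⟨h₀, h₁⟩
    | succ d ih => exact ⟨ih.2, ih.2.succ ih.1⟩
  have down : ∀ d ≤ j, ForcedAt n S (j - d) ∧ ForcedAt n S (j - d + 1) := by
    intro d
    induction d with
    | zero => exact fun _ => ⟨h₀, h₁⟩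
    | succ d ih =>
      intro hd
      have e : j - d = j - (d + 1) + 1 := by omega
      obtain ⟨h₀', h₁'⟩ := ih (by omega)
      rw [e] at h₀' h₁'
      exact ⟨.pred (by omega) h₀' h₁', h₀'⟩
  rcases le_total j m with h | h
  · simpa [Nat.add_sub_cancel' h] using (up (m - j)).1
  · simpa [Nat.sub_sub_self h] using (down (j - m) (by omega)).1

theorem mem_of_forced {S : Finset (Fin n)}
    (hS : S.map Fin.valEmbedding ⊆ Ioo 0 (n - 1)) (hc : NoConsecutive (S.map Fin.valEmbedding))
    {v : Fin n} (hv : (pathG n).Forced S v) : v ∈ S := by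
  induction hv with
  | mem h => exact h
  | @force u v hadj _ _ hu ihw =>
    have hu' := hS (mem_map_of_mem _ hu)
    simp only [Fin.valEmbedding_apply, mem_Ioo] at hu'
    exfalso
    rcases adj_iff.1 hadj with h | h
    · have hw := ihw ⟨u - 1, by omega⟩ (adj_iff.2 (.inr (by simp; omega)))
        (fun e => by rw [← e] at h; simp at h; omega)
      refine hc (u - 1) (mem_map_of_mem _ hw) ?_
      rw [Nat.sub_add_cancel hu'.1]
      exact mem_map_of_mem _ hu
    · have hw := ihw ⟨u + 1, by omega⟩ (adj_iff.2 (.inl rfl))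
        (fun e => by rw [← e] at h; simp at h; omega)
      exact hc u (mem_map_of_mem _ hu) (mem_map_of_mem _ hw)

theorem isZeroForcingSet_iff (hn : 0 < n) (S : Finset (Fin n)) :
    (pathG n).IsZeroForcingSet S ↔
      ¬ (S.map Fin.valEmbedding ⊆ Ioo 0 (n - 1) ∧ NoConsecutive (S.map Fin.valEmbedding)) := by
  constructor
  · rintro hS ⟨hsub, hc⟩
    have := hsub (mem_map_of_mem Fin.valEmbedding (mem_of_forced hsub hc (hS ⟨0, hn⟩)))
    simp at this
  · intro hbad v
    suffices ∀ m, ForcedAt n S m from this v v.isLt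
    rcases not_and_or.1 hbad with hsub | hc
    · obtain ⟨_, hx, hxI⟩ := not_subset.1 hsub
      obtain ⟨v, hv, rfl⟩ := mem_map.1 hx
      simp only [Fin.valEmbedding_apply, mem_Ioo, not_and_or, not_lt] at hxI
      rcases hxI with h0 | hlast
      · have h₀ : ForcedAt n S 0 := Nat.le_zero.1 h0 ▸ forcedAt_of_mem hv
        exact forcedAt_of_consecutive hn h₀ (h₀.succ h₀)
      · exact forcedAt_of_consecutive v.isLt (forcedAt_of_mem hv) (forcedAt_of_ge (by omega))
    · simp only [NoConsecutive, not_forall, not_not] at hc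
      obtain ⟨_, hx, hx1⟩ := hc
      obtain ⟨u, hu, rfl⟩ := mem_map.1 hx
      obtain ⟨w, hw, hw'⟩ := mem_map.1 hx1
      exact forcedAt_of_consecutive u.isLt (forcedAt_of_mem hu) (hw' ▸ forcedAt_of_mem hw)

end pathG

theorem zcount_path_general (n i : ℕ) (hn : 1 ≤ n) :
    (pathG n).zcount i = n.choose i - (n - i - 1).choose i := by
  classical
  let NonForcing : Finset ℕ → Prop := fun t => t ⊆ Ioo 0 (n - 1) ∧ NoConsecutive t
  have hNonForcing : #{t ∈ (Iio n).powersetCard i | NonForcing t} = (n - i - 1).choose i := by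
    have hsub : Ioo 0 (n - 1) ⊆ Iio n :=
      Ioo_subset_Iio_self.trans (Iio_subset_Iio (Nat.sub_le n 1))
    rw [filter_powersetCard_subset_and hsub, ← zero_add (n - 1),
      card_noConsecutive_Ioo, Nat.sub_right_comm]
  calc (pathG n).zcount i
      = #{S ∈ (univ : Finset (Fin n)).powersetCard i |
          ¬ NonForcing (S.map Fin.valEmbedding)} := by
        rw [SimpleGraph.zcount, Nat.card_eq_fintype_card, Fintype.card_subtype]
        congr 1
        ext S
        simp [pathG.isZeroForcingSet_iff hn, NonForcing]
    _ = n.choose i - #{S ∈ (univ : Finset (Fin n)).powersetCard i |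
          NonForcing (S.map Fin.valEmbedding)} := by
        have := card_filter_add_card_filter_not (s := univ.powersetCard i)
          (fun S : Finset (Fin n) => NonForcing (S.map Fin.valEmbedding))
        rw [card_powersetCard, card_univ, Fintype.card_fin] at this
        omega
    _ = n.choose i - (n - i - 1).choose i := by
        rw [card_filter_powersetCard_map_valEmbedding n i NonForcing, hNonForcing]

/-- For `n ≥ 1` and `1 ≤ i ≤ n`, the path `P_n` has exactly
`C(n,i) − C(n−i−1,i)` zero forcing sets of size `i`. -/
theorem zcount_path (n i : ℕ) (hn : 1 ≤ n) (h1 : 1 ≤ i) (h2 : i ≤ n) :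
    (pathG n).zcount i = n.choose i - (n - i - 1).choose i :=
  zcount_path_general n i hn
end

section
/- For n ≥ 3, the number of zero forcing sets of the cycle C_n of size i (for 2 ≤ i ≤ n) equals C(n,i) − (n/i)·C(n−i−1, i−1), with the convention C(a,b)=0 when 0 ≤ a < b. -/
set_option linter.unusedSectionVars false
set_option linter.unusedVariables false
open Fin.CommRing Fin.NatCast

section Cycle
variable {n : ℕ} [NeZero n]

lemma succ_mod_cases (a : Fin n) :
    ((a.val + 1) % n = a.val + 1 ∧ a.val + 1 < n) ∨ ((a.val + 1) % n = 0 ∧ a.val + 1 = n) := by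
  rcases Nat.lt_or_ge (a.val + 1) n with h | h
  · exact Or.inl ⟨Nat.mod_eq_of_lt h, h⟩
  · have he : a.val + 1 = n := by have := a.is_lt; omega
    exact Or.inr ⟨by rw [he, Nat.mod_self], he⟩

lemma val_add_one (a : Fin n) : (a + 1 : Fin n).val = (a.val + 1) % n := by
  rw [Fin.val_add, Fin.val_one']
  rcases Nat.lt_or_ge 1 n with h | h
  · rw [Nat.mod_eq_of_lt h]
  · have hn1 : n = 1 := le_antisymm h (Nat.one_le_iff_ne_zero.2 (NeZero.ne n))
    subst hn1; omega

lemma cycle_adj (hn : 3 ≤ n) (u v : Fin n) :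
    (cycleG n).Adj u v ↔ (v = u + 1 ∨ u = v + 1) := by
  have hval := fun a : Fin n => val_add_one a
  rw [cycleG, SimpleGraph.fromRel_adj]
  constructor
  · rintro ⟨hne, h | h⟩
    · left; apply Fin.ext; rw [hval, h]
    · right; apply Fin.ext; rw [hval, h]
  · intro h
    refine ⟨?_, ?_⟩
    · rintro rfl
      rcases h with h | h <;>
      · have := congrArg Fin.val h
        rw [hval] at this
        rcases succ_mod_cases u with ⟨h1, h2⟩ | ⟨h1, h2⟩ <;> omega
    · rcases h with h | h
      · left; rw [h, hval]
      · right; rw [h, hval]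



lemma neighbors_ne (hn : 3 ≤ n) (u : Fin n) : u + 1 ≠ u - 1 := by
  intro h
  have h2 : u + (1 + 1) = u + 0 := by rw [← add_assoc, h]; ring
  have h4 : (1 + 1 : Fin n) = 0 := add_left_cancel h2
  have h5 := congrArg Fin.val h4
  rw [val_add_one, Fin.val_one', Fin.val_zero, Nat.mod_eq_of_lt (show 1 < n by omega),
    Nat.mod_eq_of_lt (show 1 + 1 < n by omega)] at h5
  omega

lemma adj_cases (hn : 3 ≤ n) {u w : Fin n} (h : (cycleG n).Adj u w) :
    w = u + 1 ∨ w = u - 1 := by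
  rcases (cycle_adj hn u w).1 h with h | h
  · exact Or.inl h
  · right; rw [h]; ring

lemma forced_all (hn : 3 ≤ n) {S : Set (Fin n)} {a : Fin n}
    (ha : a ∈ S) (ha1 : a + 1 ∈ S) : ∀ v, (cycleG n).Forced S v := by
  have key : ∀ k : ℕ, (cycleG n).Forced S (a + (k : Fin n)) ∧
      (cycleG n).Forced S (a + (k : Fin n) + 1) := by
    intro k
    induction k with
    | zero => simpa using ⟨SimpleGraph.Forced.mem ha, SimpleGraph.Forced.mem ha1⟩
    | succ k ih =>
      have hcast : ((k + 1 : ℕ) : Fin n) = (k : Fin n) + 1 := by push_cast; ring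
      rw [hcast, ← add_assoc]
      refine ⟨ih.2, ?_⟩
      set u := a + (k : Fin n) + 1 with hu
      refine SimpleGraph.Forced.force (v := u + 1) ((cycle_adj hn u (u + 1)).2 (Or.inl rfl))
        ih.2 ?_
      intro w hadj hne
      rcases adj_cases hn hadj with h | h
      · exact absurd h hne
      · have : w = a + (k : Fin n) := by rw [h, hu]; ring
        rw [this]; exact ih.1
  intro v
  have : v = a + ((v - a).val : Fin n) := by
    rw [Fin.cast_val_eq_self]; ring
  rw [this]; exact (key _).1

lemma forced_subset (hn : 3 ≤ n) {S : Finset (Fin n)}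
    (hind : ∀ b ∈ S, b + 1 ∉ S) : ∀ v, (cycleG n).Forced ↑S v → v ∈ S := by
  intro v h
  induction h with
  | mem h => exact h
  | @force u v hadj hu hw ihu ihw =>
    exfalso
    rcases adj_cases hn hadj with h | h
    · -- v = u + 1, other neighbor is u - 1
      have hne : u - 1 ≠ v := by rw [h]; exact fun he => neighbors_ne hn u he.symm
      have hadj' : (cycleG n).Adj u (u - 1) := by
        refine (cycle_adj hn u (u - 1)).2 (Or.inr ?_); ring
      have hmem : u - 1 ∈ S := ihw _ hadj' hne
      exact hind _ hmem (by simpa using ihu)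
    · -- v = u - 1, other neighbor is u + 1
      have hne : u + 1 ≠ v := by rw [h]; exact neighbors_ne hn u
      have hadj' : (cycleG n).Adj u (u + 1) := (cycle_adj hn u (u + 1)).2 (Or.inl rfl)
      have hmem : u + 1 ∈ S := ihw _ hadj' hne
      exact hind _ ihu hmem

lemma zfs_iff (hn : 3 ≤ n) (S : Finset (Fin n)) :
    (cycleG n).IsZeroForcingSet ↑S ↔ ∃ a, a ∈ S ∧ a + 1 ∈ S := by
  constructor
  · intro h
    by_contra hcon
    push_neg at hcon
    have hind : ∀ b ∈ S, b + 1 ∉ S := fun b hb => hcon b hb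
    have hall : ∀ v, v ∈ S := fun v => forced_subset hn hind v (h v)
    exact hcon 0 (hall 0) (hall (0 + 1))
  · rintro ⟨a, ha, ha1⟩
    exact forced_all hn (by simpa using ha) (by simpa using ha1)
end Cycle

section PathCount

/-- Number of `k`-subsets of `{0,...,m-1}` with no two consecutive elements. -/
lemma path_count : ∀ m k : ℕ,
    ((Finset.range m).powerset.filter
      (fun T => T.card = k ∧ ∀ a ∈ T, a + 1 ∉ T)).card = (m + 1 - k).choose k := by
  intro m
  induction m using Nat.strong_induction_on with
  | _ m ih =>
    intro k
    match m, k with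
    | m, 0 =>
      rw [show ((Finset.range m).powerset.filter
          (fun T => T.card = 0 ∧ ∀ a ∈ T, a + 1 ∉ T)) = {∅} from ?_]
      · simp
      · ext T
        simp only [Finset.mem_filter, Finset.mem_powerset, Finset.mem_singleton,
          Finset.card_eq_zero]
        constructor
        · rintro ⟨_, h, _⟩; exact h
        · rintro rfl; simp
    | 0, k + 1 =>
      rw [show ((Finset.range 0).powerset.filter
          (fun T => T.card = k + 1 ∧ ∀ a ∈ T, a + 1 ∉ T)) = ∅ from ?_]
      · simp
      · ext T
        simp only [Finset.range_zero, Finset.powerset_empty, Finset.mem_filter,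
          Finset.mem_singleton, Finset.notMem_empty, iff_false]
        rintro ⟨rfl, h, _⟩
        simp at h
    | 1, k + 1 =>
      rw [show ((Finset.range 1).powerset.filter
          (fun T => T.card = k + 1 ∧ ∀ a ∈ T, a + 1 ∉ T)) =
            if k = 0 then {{0}} else ∅ from ?_]
      · rcases Nat.eq_zero_or_pos k with rfl | hk
        · simp
        · rw [if_neg (by omega)]
          simp [Nat.choose_eq_zero_of_lt (show 1 + 1 - (k + 1) < k + 1 by omega)]
          simp [Nat.choose_eq_zero_of_lt (show 1 - k < k + 1 by omega)]
      · ext T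
        simp only [Finset.mem_filter, Finset.mem_powerset, Finset.range_one,
          Finset.subset_singleton_iff]
        constructor
        · rintro ⟨rfl | rfl, hc, hcons⟩
          · simp at hc
          · simp at hc
            subst hc
            simp
        · intro hT
          rcases Nat.eq_zero_or_pos k with rfl | hk
          · simp at hT
            subst hT
            refine ⟨Or.inr rfl, by simp, ?_⟩
            intro a ha
            simp at ha
            subst ha
            simp
          · rw [if_neg (by omega)] at hT
            simp at hT
    | (m + 2), (k + 1) =>
      classical
      have hsplit := Finset.card_filter_add_card_filter_not
        (s := (Finset.range (m + 2)).powerset.filter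
          (fun T => T.card = k + 1 ∧ ∀ a ∈ T, a + 1 ∉ T))
        (p := fun T => m + 1 ∈ T)
      have h1 : (((Finset.range (m + 2)).powerset.filter
            (fun T => T.card = k + 1 ∧ ∀ a ∈ T, a + 1 ∉ T)).filter
              (fun T => ¬ m + 1 ∈ T)) =
          (Finset.range (m + 1)).powerset.filter
            (fun T => T.card = k + 1 ∧ ∀ a ∈ T, a + 1 ∉ T) := by
        ext T
        simp only [Finset.mem_filter, Finset.mem_powerset]
        constructor
        · rintro ⟨⟨hsub, hc, hcons⟩, hnm⟩
          refine ⟨?_, hc, hcons⟩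
          intro a ha
          have h1 := hsub ha
          simp only [Finset.mem_range] at h1 ⊢
          have : a ≠ m + 1 := by rintro rfl; exact hnm ha
          omega
        · rintro ⟨hsub, hc, hcons⟩
          have hnm : m + 1 ∉ T := fun h => by
            have := hsub h; simp only [Finset.mem_range] at this; omega
          refine ⟨⟨fun a ha => ?_, hc, hcons⟩, hnm⟩
          have := hsub ha; simp only [Finset.mem_range] at this ⊢; omega
      have h2 : (((Finset.range (m + 2)).powerset.filter
            (fun T => T.card = k + 1 ∧ ∀ a ∈ T, a + 1 ∉ T)).filter
              (fun T => m + 1 ∈ T)).card =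
          ((Finset.range m).powerset.filter
            (fun T => T.card = k ∧ ∀ a ∈ T, a + 1 ∉ T)).card := by
        refine Finset.card_bij' (fun T _ => T.erase (m + 1))
          (fun T _ => insert (m + 1) T) ?_ ?_ ?_ ?_
        · intro T hT
          simp only [Finset.mem_filter, Finset.mem_powerset] at hT ⊢
          obtain ⟨⟨hsub, hc, hcons⟩, hmem⟩ := hT
          refine ⟨?_, ?_, ?_⟩
          · intro a ha
            rw [Finset.mem_erase] at ha
            obtain ⟨hne, haT⟩ := ha
            have h1 := hsub haT
            simp only [Finset.mem_range] at h1 ⊢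
            have : a ≠ m := by
              rintro rfl
              exact hcons a haT hmem
            omega
          · rw [Finset.card_erase_of_mem hmem, hc]; omega
          · intro a ha
            rw [Finset.mem_erase] at ha
            intro hcon
            exact hcons a ha.2 (Finset.mem_of_mem_erase hcon)
        · intro T hT
          simp only [Finset.mem_filter, Finset.mem_powerset] at hT ⊢
          obtain ⟨hsub, hc, hcons⟩ := hT
          have hnm : m + 1 ∉ T := fun h => by have := hsub h; simp only [Finset.mem_range] at this; omega
          refine ⟨⟨?_, ?_, ?_⟩, Finset.mem_insert_self _ _⟩
          · intro a ha
            rcases Finset.mem_insert.1 ha with rfl | haT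
            · simp
            · have := hsub haT; simp only [Finset.mem_range] at this ⊢; omega
          · rw [Finset.card_insert_of_notMem hnm, hc]
          · intro a ha
            rcases Finset.mem_insert.1 ha with rfl | haT
            · intro hcon
              rcases Finset.mem_insert.1 hcon with h | h
              · omega
              · have := hsub h; simp only [Finset.mem_range] at this; omega
            · intro hcon
              rcases Finset.mem_insert.1 hcon with h | h
              · have := hsub haT; simp only [Finset.mem_range] at this; omega
              · exact hcons a haT h
        · intro T hT
          simp only [Finset.mem_filter] at hT
          exact Finset.insert_erase hT.2
        · intro T hT
          simp only [Finset.mem_filter, Finset.mem_powerset] at hT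
          apply Finset.erase_insert
          intro h
          have := hT.1 h; simp only [Finset.mem_range] at this; omega
      have e1 := ih (m + 1) (by omega) (k + 1)
      have e2 := ih m (by omega) k
      rw [h1, e1, h2, e2] at hsplit
      rw [← hsplit]
      rcases Nat.lt_or_ge (m + 1) k with h | h
      · rw [Nat.choose_eq_zero_of_lt (by omega), Nat.choose_eq_zero_of_lt (by omega),
          Nat.choose_eq_zero_of_lt (by omega)]
      · have h3 : m + 2 + 1 - (k + 1) = (m + 1 - k) + 1 := by omega
        have h4 : m + 1 + 1 - (k + 1) = m + 1 - k := by omega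
        rw [h3, h4, Nat.choose_succ_succ]

end PathCount

section Counting
variable {n : ℕ} [NeZero n]

lemma indep_bound (hn : 3 ≤ n) {S : Finset (Fin n)}
    (hind : ∀ a ∈ S, a + 1 ∉ S) (h0 : (0 : Fin n) ∈ S) :
    ∀ a : Fin n, a ∈ S.erase 0 → 2 ≤ a.val ∧ a.val ≤ n - 2 := by
  have hval0 : ((0 : Fin n) + 1).val = 1 := by
    rw [val_add_one, Fin.val_zero, Nat.mod_eq_of_lt (by omega)]
  intro a ha
  rw [Finset.mem_erase] at ha
  obtain ⟨hne, haS⟩ := ha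
  have hne0 : a.val ≠ 0 := fun h => hne (Fin.ext h)
  have hne1 : a.val ≠ 1 := by
    intro h
    have hone : a = 0 + 1 := Fin.ext (by rw [hval0, h])
    exact hind 0 h0 (hone ▸ haS)
  have hnen1 : a.val ≠ n - 1 := by
    intro h
    have h01 : (a + 1 : Fin n) = 0 := by
      apply Fin.ext
      rw [val_add_one, h, Fin.val_zero]
      have hh : n - 1 + 1 = n := by omega
      rw [hh, Nat.mod_self]
    exact hind a haS (h01 ▸ h0)
  have := a.is_lt
  omega

/-- The number of independent `i`-sets of the cycle containing `0`. -/
lemma zero_indep_count (hn : 3 ≤ n) {i : ℕ} (hi : 1 ≤ i) :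
    ((Finset.univ.filter (fun S : Finset (Fin n) =>
        S.card = i ∧ ∀ a ∈ S, a + 1 ∉ S)).filter (fun S => (0 : Fin n) ∈ S)).card =
      (n - i - 1).choose (i - 1) := by
  have hval0 : ((0 : Fin n) + 1).val = 1 := by
    rw [val_add_one, Fin.val_zero, Nat.mod_eq_of_lt (by omega)]
  have key : ((Finset.univ.filter (fun S : Finset (Fin n) =>
        S.card = i ∧ ∀ a ∈ S, a + 1 ∉ S)).filter (fun S => (0 : Fin n) ∈ S)).card =
      ((Finset.range (n - 3)).powerset.filter
        (fun T => T.card = i - 1 ∧ ∀ a ∈ T, a + 1 ∉ T)).card := by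
    refine Finset.card_bij' (fun S _ => (S.erase 0).image (fun a : Fin n => a.val - 2))
      (fun T _ => insert (0 : Fin n) (T.image (fun t => ((t + 2 : ℕ) : Fin n)))) ?_ ?_ ?_ ?_
    · intro S hS
      simp only [Finset.mem_filter, Finset.mem_univ, true_and, Finset.mem_powerset] at hS ⊢
      obtain ⟨⟨hc, hind⟩, h0⟩ := hS
      have hbound := indep_bound hn hind h0
      refine ⟨?_, ?_, ?_⟩
      · intro b hb
        rw [Finset.mem_image] at hb
        obtain ⟨a, ha, rfl⟩ := hb
        have := hbound a ha
        rw [Finset.mem_range]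
        omega
      · rw [Finset.card_image_of_injOn, Finset.card_erase_of_mem h0, hc]
        intro a ha b hb hab
        simp only at hab
        have h1 := hbound a ha
        have h2 := hbound b hb
        exact Fin.ext (by omega)
      · intro t ht hcon
        rw [Finset.mem_image] at ht hcon
        obtain ⟨a, ha, hat⟩ := ht
        obtain ⟨b, hb, hbt⟩ := hcon
        have h1 := hbound a ha
        have h2 := hbound b hb
        have hba : b.val = a.val + 1 := by omega
        have : b = a + 1 := by
          apply Fin.ext
          rw [val_add_one, Nat.mod_eq_of_lt (by omega), hba]
        exact hind a (Finset.mem_of_mem_erase ha) (this ▸ Finset.mem_of_mem_erase hb)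
    · intro T hT
      simp only [Finset.mem_filter, Finset.mem_univ, true_and, Finset.mem_powerset] at hT ⊢
      obtain ⟨hsub, hc, hcons⟩ := hT
      have hvt : ∀ t ∈ T, ((t + 2 : ℕ) : Fin n).val = t + 2 := by
        intro t ht
        have := hsub ht
        rw [Finset.mem_range] at this
        rw [Fin.val_natCast, Nat.mod_eq_of_lt (by omega)]
      have h0img : (0 : Fin n) ∉ T.image (fun t => ((t + 2 : ℕ) : Fin n)) := by
        intro h
        rw [Finset.mem_image] at h
        obtain ⟨t, ht, hcon⟩ := h
        have := congrArg Fin.val hcon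
        rw [hvt t ht, Fin.val_zero] at this
        omega
      refine ⟨⟨?_, ?_⟩, Finset.mem_insert_self _ _⟩
      · rw [Finset.card_insert_of_notMem h0img, Finset.card_image_of_injOn, hc]
        · omega
        · intro a ha b hb hab
          have := congrArg Fin.val hab
          rw [hvt a ha, hvt b hb] at this
          omega
      · intro a ha
        rcases Finset.mem_insert.1 ha with rfl | haT
        · intro hcon
          rcases Finset.mem_insert.1 hcon with h | h
          · have := congrArg Fin.val h
            rw [hval0, Fin.val_zero] at this
            omega
          · rw [Finset.mem_image] at h
            obtain ⟨t, ht, hcon2⟩ := h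
            have := congrArg Fin.val hcon2
            rw [hvt t ht, hval0] at this
            omega
        · rw [Finset.mem_image] at haT
          obtain ⟨t, ht, rfl⟩ := haT
          have htn : t + 2 < n - 1 := by
            have := hsub ht
            rw [Finset.mem_range] at this
            omega
          have hv1 : (((t + 2 : ℕ) : Fin n) + 1).val = t + 3 := by
            rw [val_add_one, hvt t ht, Nat.mod_eq_of_lt (by omega)]
          intro hcon
          rcases Finset.mem_insert.1 hcon with h | h
          · have := congrArg Fin.val h
            rw [hv1, Fin.val_zero] at this
            omega
          · rw [Finset.mem_image] at h
            obtain ⟨s, hs, hcon2⟩ := h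
            have := congrArg Fin.val hcon2
            rw [hvt s hs, hv1] at this
            have : s = t + 1 := by omega
            subst this
            exact hcons t ht hs
    · intro S hS
      simp only [Finset.mem_filter, Finset.mem_univ, true_and] at hS
      obtain ⟨⟨hc, hind⟩, h0⟩ := hS
      have hbound := indep_bound hn hind h0
      rw [Finset.image_image]
      have himg : (S.erase 0).image ((fun t => ((t + 2 : ℕ) : Fin n)) ∘ fun a : Fin n => a.val - 2)
          = S.erase 0 := by
        rw [show ((fun t => ((t + 2 : ℕ) : Fin n)) ∘ fun a : Fin n => a.val - 2)
            = fun a : Fin n => ((a.val - 2 + 2 : ℕ) : Fin n) from rfl]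
        rw [Finset.image_congr (g := id), Finset.image_id]
        intro a ha
        have := hbound a ha
        simp only [id]
        rw [show a.val - 2 + 2 = a.val by omega, Fin.cast_val_eq_self]
      rw [himg, Finset.insert_erase h0]
    · intro T hT
      simp only [Finset.mem_filter, Finset.mem_powerset] at hT
      obtain ⟨hsub, hc, hcons⟩ := hT
      have hvt : ∀ t ∈ T, ((t + 2 : ℕ) : Fin n).val = t + 2 := by
        intro t ht
        have := hsub ht
        rw [Finset.mem_range] at this
        rw [Fin.val_natCast, Nat.mod_eq_of_lt (by omega)]
      have h0img : (0 : Fin n) ∉ T.image (fun t => ((t + 2 : ℕ) : Fin n)) := by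
        intro h
        rw [Finset.mem_image] at h
        obtain ⟨t, ht, hcon⟩ := h
        have := congrArg Fin.val hcon
        rw [hvt t ht, Fin.val_zero] at this
        omega
      rw [Finset.erase_insert h0img, Finset.image_image]
      rw [Finset.image_congr (g := id), Finset.image_id]
      intro t ht
      simp only [Function.comp, id]
      rw [hvt t ht]
      omega
  rw [key, path_count]
  congr 1
  omega

end Counting

section Counting2
variable {n : ℕ} [NeZero n]

lemma mem_image_sub (S : Finset (Fin n)) (c b : Fin n) :
    b ∈ S.image (· - c) ↔ b + c ∈ S := by
  rw [Finset.mem_image]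
  constructor
  · rintro ⟨x, hx, rfl⟩
    simpa [sub_add_cancel] using hx
  · intro h
    exact ⟨b + c, h, by ring⟩

lemma rotate_count (i : ℕ) (a : Fin n) :
    (((Finset.univ.filter (fun S : Finset (Fin n) =>
        S.card = i ∧ ∀ b ∈ S, b + 1 ∉ S))).filter (fun S => a ∈ S)).card =
    (((Finset.univ.filter (fun S : Finset (Fin n) =>
        S.card = i ∧ ∀ b ∈ S, b + 1 ∉ S))).filter (fun S => (0 : Fin n) ∈ S)).card := by
  have hinj : ∀ c : Fin n, Function.Injective (· - c : Fin n → Fin n) :=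
    fun c x y h => by simpa using sub_left_injective h
  refine Finset.card_bij' (fun S _ => S.image (· - a)) (fun S _ => S.image (· - (-a)))
    ?_ ?_ ?_ ?_
  · intro S hS
    simp only [Finset.mem_filter, Finset.mem_univ, true_and] at hS ⊢
    obtain ⟨⟨hc, hind⟩, ha⟩ := hS
    refine ⟨⟨?_, ?_⟩, ?_⟩
    · rw [Finset.card_image_of_injective _ (hinj a), hc]
    · intro b hb hcon
      rw [mem_image_sub] at hb hcon
      have : b + 1 + a = (b + a) + 1 := by ring
      rw [this] at hcon
      exact hind _ hb hcon
    · rw [mem_image_sub, zero_add]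
      exact ha
  · intro S hS
    simp only [Finset.mem_filter, Finset.mem_univ, true_and] at hS ⊢
    obtain ⟨⟨hc, hind⟩, h0⟩ := hS
    refine ⟨⟨?_, ?_⟩, ?_⟩
    · rw [Finset.card_image_of_injective _ (hinj (-a)), hc]
    · intro b hb hcon
      rw [mem_image_sub] at hb hcon
      have : b + 1 + -a = (b + -a) + 1 := by ring
      rw [this] at hcon
      exact hind _ hb hcon
    · rw [mem_image_sub]
      simpa using h0
  · intro S hS
    rw [Finset.image_image]
    rw [Finset.image_congr (g := id), Finset.image_id]
    intro x hx
    simp only [Function.comp, id]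
    ring
  · intro S hS
    rw [Finset.image_image]
    rw [Finset.image_congr (g := id), Finset.image_id]
    intro x hx
    simp only [Function.comp, id]
    ring

lemma indep_double_count (hn : 3 ≤ n) {i : ℕ} (hi : 1 ≤ i) :
    i * ((Finset.univ.filter (fun S : Finset (Fin n) =>
        S.card = i ∧ ∀ b ∈ S, b + 1 ∉ S))).card =
      n * (n - i - 1).choose (i - 1) := by
  set F := (Finset.univ.filter (fun S : Finset (Fin n) =>
      S.card = i ∧ ∀ b ∈ S, b + 1 ∉ S)) with hF
  have hcard : ∀ S ∈ F, S.card = i := by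
    intro S hS
    rw [hF, Finset.mem_filter] at hS
    exact hS.2.1
  have h1 : i * F.card = ∑ S ∈ F, S.card := by
    rw [Finset.sum_congr rfl hcard, Finset.sum_const, smul_eq_mul, mul_comm]
  have h2 : ∀ S : Finset (Fin n), S.card = ∑ a : Fin n, if a ∈ S then 1 else 0 := by
    intro S
    rw [← Finset.sum_filter, Finset.filter_univ_mem, Finset.card_eq_sum_ones]
  have h3 : i * F.card = ∑ a : Fin n, (F.filter (fun S => a ∈ S)).card := by
    rw [h1]
    rw [Finset.sum_congr rfl (fun S _ => h2 S), Finset.sum_comm]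
    congr 1
    ext a
    rw [← Finset.sum_filter, Finset.card_eq_sum_ones]
  rw [h3]
  rw [Finset.sum_congr rfl (fun a _ => rotate_count i a), Finset.sum_const,
    Finset.card_univ, Fintype.card_fin, smul_eq_mul]
  rw [zero_indep_count hn hi]

end Counting2

/-- For `n ≥ 3` and `2 ≤ i ≤ n`, the cycle `C_n` has exactly
`C(n,i) − (n/i)·C(n−i−1,i−1)` zero forcing sets of size `i`. -/
theorem zcount_cycle (n i : ℕ) (hn : 3 ≤ n) (h1 : 2 ≤ i) (h2 : i ≤ n) :
    ((cycleG n).zcount i : ℚ) =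
      (n.choose i : ℚ) - (n : ℚ) / (i : ℚ) * ((n - i - 1).choose (i - 1) : ℚ) := by
  haveI : NeZero n := ⟨by omega⟩
  classical
  have heq : {S : Finset (Fin n) // S.card = i ∧ (cycleG n).IsZeroForcingSet ↑S} ≃
      {S : Finset (Fin n) // S.card = i ∧ ∃ a, a ∈ S ∧ a + 1 ∈ S} :=
    Equiv.subtypeEquivRight (fun S => and_congr_right fun _ => zfs_iff hn S)
  have hz : (cycleG n).zcount i = (Finset.univ.filter
      (fun S : Finset (Fin n) => S.card = i ∧ ∃ a, a ∈ S ∧ a + 1 ∈ S)).card := by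
    rw [SimpleGraph.zcount, Nat.card_congr heq, Nat.card_eq_fintype_card,
      Fintype.card_subtype]
  have hsplit := Finset.card_filter_add_card_filter_not
    (s := Finset.univ.filter (fun S : Finset (Fin n) => S.card = i))
    (p := fun S => ∃ a, a ∈ S ∧ a + 1 ∈ S)
  have hpos : (Finset.univ.filter (fun S : Finset (Fin n) => S.card = i)).filter
      (fun S => ∃ a, a ∈ S ∧ a + 1 ∈ S) =
      Finset.univ.filter (fun S : Finset (Fin n) => S.card = i ∧ ∃ a, a ∈ S ∧ a + 1 ∈ S) := by
    rw [Finset.filter_filter]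
  have hneg : (Finset.univ.filter (fun S : Finset (Fin n) => S.card = i)).filter
      (fun S => ¬ ∃ a, a ∈ S ∧ a + 1 ∈ S) =
      Finset.univ.filter (fun S : Finset (Fin n) => S.card = i ∧ ∀ b ∈ S, b + 1 ∉ S) := by
    ext S
    simp only [Finset.mem_filter, Finset.mem_univ, true_and, and_assoc]
    constructor
    · rintro ⟨hc, hncon⟩
      push_neg at hncon
      exact ⟨hc, hncon⟩
    · rintro ⟨hc, hind⟩
      refine ⟨hc, ?_⟩
      push_neg
      exact hind
  have htot : (Finset.univ.filter (fun S : Finset (Fin n) => S.card = i)).card =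
      n.choose i := by
    rw [show (Finset.univ.filter (fun S : Finset (Fin n) => S.card = i)) =
        Finset.powersetCard i (Finset.univ : Finset (Fin n)) from ?_]
    · rw [Finset.card_powersetCard, Finset.card_univ, Fintype.card_fin]
    · rw [Finset.powersetCard_eq_filter, Finset.powerset_univ]
  rw [hpos, hneg, htot] at hsplit
  set I := (Finset.univ.filter
      (fun S : Finset (Fin n) => S.card = i ∧ ∀ b ∈ S, b + 1 ∉ S)).card with hI
  have hdc := indep_double_count hn (show 1 ≤ i by omega)
  rw [← hI] at hdc
  have hzc : (cycleG n).zcount i = n.choose i - I := by omega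
  rw [hzc, Nat.cast_sub (by omega)]
  have hi0 : (i : ℚ) ≠ 0 := by
    simp only [ne_eq, Nat.cast_eq_zero]
    omega
  have hIq : (I : ℚ) = (n : ℚ) / (i : ℚ) * ((n - i - 1).choose (i - 1) : ℚ) := by
    rw [div_mul_eq_mul_div, eq_div_iff hi0]
    have := congrArg (fun x : ℕ => (x : ℚ)) hdc
    push_cast at this ⊢
    linarith
  rw [hIq]
end

section
/- For a path P_n, a set S of i vertices fails to be a zero forcing set if and only if S contains no end-vertex of the path and no two adjacent vertices; the number of such sets is C(n−i−1, i). -/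
open SimpleGraph

lemma path_adj {n : ℕ} (u v : Fin n) :
    (pathG n).Adj u v ↔ ((u : ℕ) + 1 = v ∨ (v : ℕ) + 1 = u) := by
  simp only [pathG, SimpleGraph.fromRel_adj]
  constructor
  · rintro ⟨-, h⟩; exact h
  · intro h; refine ⟨?_, h⟩; rintro rfl; omega

lemma forced_up {n : ℕ} (S : Set (Fin n)) (a : ℕ) (ha : a < n)
    (h0 : ∀ _ : 1 ≤ a, (pathG n).Forced S ⟨a - 1, by omega⟩)
    (h1 : (pathG n).Forced S ⟨a, ha⟩) :
    ∀ j : Fin n, a ≤ (j : ℕ) → (pathG n).Forced S j := by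
  suffices H : ∀ d : ℕ, ∀ j : Fin n, a ≤ (j : ℕ) → (j : ℕ) ≤ a + d → (pathG n).Forced S j by
    intro j hj
    exact H ((j : ℕ) - a) j hj (by omega)
  intro d
  induction d with
  | zero =>
    intro j hj1 hj2
    have : j = ⟨a, ha⟩ := by apply Fin.ext; show (j : ℕ) = a; omega
    rwa [this]
  | succ d ih =>
    intro j hj1 hj2
    rcases Nat.lt_or_ge (j : ℕ) (a + d + 1) with h | h
    · exact ih j hj1 (by omega)
    have hjv : (j : ℕ) = a + d + 1 := by omega
    have hlt : a + d < n := by omega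
    refine Forced.force (u := ⟨a + d, hlt⟩)
      ((path_adj _ _).2 (Or.inl (show a + d + 1 = (j : ℕ) by omega)))
      (ih ⟨a + d, hlt⟩ (by show a ≤ a + d; omega) (by show a + d ≤ a + d; omega)) ?_
    intro w hw hwj
    rw [path_adj] at hw
    have hwv : (w : ℕ) + 1 = a + d := by
      rcases hw with hw | hw
      · simp only [show ((⟨a + d, hlt⟩ : Fin n) : ℕ) = a + d from rfl] at hw
        exact absurd (Fin.ext (show (w : ℕ) = (j : ℕ) by omega)) hwj
      · simpa using hw
    rcases Nat.eq_zero_or_pos d with rfl | hd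
    · have h1a : 1 ≤ a := by omega
      have : w = ⟨a - 1, by omega⟩ := by apply Fin.ext; show (w : ℕ) = a - 1; omega
      rw [this]; exact h0 h1a
    · exact ih w (by omega) (by omega)

lemma forced_down {n : ℕ} (S : Set (Fin n)) (b : ℕ) (hb : b < n)
    (h0 : ∀ _ : b + 2 ≤ n, (pathG n).Forced S ⟨b + 1, by omega⟩)
    (h1 : (pathG n).Forced S ⟨b, hb⟩) :
    ∀ j : Fin n, (j : ℕ) ≤ b → (pathG n).Forced S j := by
  suffices H : ∀ d : ℕ, ∀ j : Fin n, b - d ≤ (j : ℕ) → (j : ℕ) ≤ b → (pathG n).Forced S j by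
    intro j hj
    exact H (b - (j : ℕ)) j (by omega) hj
  intro d
  induction d with
  | zero =>
    intro j hj1 hj2
    have : j = ⟨b, hb⟩ := by apply Fin.ext; show (j : ℕ) = b; omega
    rwa [this]
  | succ d ih =>
    intro j hj1 hj2
    rcases Nat.lt_or_ge (b - (d + 1)) (j : ℕ) with h | h
    · exact ih j (by omega) hj2
    have hjv : (j : ℕ) = b - (d + 1) := by omega
    rcases le_or_gt b d with hbd | hbd
    · exact ih j (by omega) hj2
    have hlt : b - d < n := by omega
    refine Forced.force (u := ⟨b - d, hlt⟩)
      ((path_adj _ _).2 (Or.inr (show (j : ℕ) + 1 = b - d by omega)))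
      (ih ⟨b - d, hlt⟩ (by show b - d ≤ b - d; omega) (by show b - d ≤ b; omega)) ?_
    intro w hw hwj
    rw [path_adj] at hw
    have hwv : (w : ℕ) = b - d + 1 := by
      simp only [show ((⟨b - d, hlt⟩ : Fin n) : ℕ) = b - d from rfl] at hw
      rcases hw with hw | hw
      · omega
      · exact absurd (Fin.ext (show (w : ℕ) = (j : ℕ) by omega)) hwj
    rcases Nat.eq_zero_or_pos d with rfl | hd
    · have h2 : b + 2 ≤ n := by omega
      have : w = ⟨b + 1, by omega⟩ := by apply Fin.ext; show (w : ℕ) = b + 1; omega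
      rw [this]; exact h0 h2
    · exact ih w (by omega) (by omega)

lemma forced_mem {n : ℕ} (S : Set (Fin n)) (hn : 1 ≤ n)
    (h0 : (⟨0, by exact Nat.lt_of_lt_of_le Nat.zero_lt_one hn⟩ : Fin n) ∉ S) (hl : (⟨n - 1, by exact Nat.sub_lt hn Nat.zero_lt_one⟩ : Fin n) ∉ S)
    (hadj : ∀ u ∈ S, ∀ v ∈ S, ¬ (pathG n).Adj u v) :
    ∀ v, (pathG n).Forced S v → v ∈ S := by
  intro v hv
  induction hv with
  | mem h => exact h
  | @force u v huv hu hw ihu ihw =>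
    exfalso
    have huS : u ∈ S := ihu
    have hu0 : (u : ℕ) ≠ 0 := by
      intro h
      exact h0 (by rwa [show (⟨0, by omega⟩ : Fin n) = u by apply Fin.ext; show (0 : ℕ) = (u : ℕ); omega])
    have hul : (u : ℕ) ≠ n - 1 := by
      intro h
      exact hl (by rwa [show (⟨n - 1, by omega⟩ : Fin n) = u by apply Fin.ext; show (n - 1 : ℕ) = (u : ℕ); omega])
    have hun : (u : ℕ) + 1 < n := by have := u.isLt; omega
    rw [path_adj] at huv
    rcases huv with huv | huv
    · -- v = u + 1; take w = u - 1
      have hwlt : (u : ℕ) - 1 < n := by omega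
      have hadjw : (pathG n).Adj u ⟨(u : ℕ) - 1, hwlt⟩ :=
        (path_adj _ _).2 (Or.inr (show (u : ℕ) - 1 + 1 = (u : ℕ) by omega))
      have hne : (⟨(u : ℕ) - 1, hwlt⟩ : Fin n) ≠ v := by
        intro h
        have := congrArg Fin.val h
        simp only at this
        omega
      exact hadj u huS _ (ihw _ hadjw hne) hadjw
    · -- u = v + 1; take w = u + 1
      have hadjw : (pathG n).Adj u ⟨(u : ℕ) + 1, hun⟩ :=
        (path_adj _ _).2 (Or.inl rfl)
      have hne : (⟨(u : ℕ) + 1, hun⟩ : Fin n) ≠ v := by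
        intro h
        have := congrArg Fin.val h
        simp only at this
        omega
      exact hadj u huS _ (ihw _ hadjw hne) hadjw

lemma not_zfs_iff {n : ℕ} (hn : 1 ≤ n) (S : Set (Fin n)) :
    ¬ (pathG n).IsZeroForcingSet S ↔
      ((⟨0, by exact Nat.lt_of_lt_of_le Nat.zero_lt_one hn⟩ : Fin n) ∉ S ∧ (⟨n - 1, by exact Nat.sub_lt hn Nat.zero_lt_one⟩ : Fin n) ∉ S ∧
        ∀ u ∈ S, ∀ v ∈ S, ¬ (pathG n).Adj u v) := by
  constructor
  · intro hnz
    by_contra hc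
    apply hnz
    push_neg at hc
    by_cases h0 : (⟨0, by omega⟩ : Fin n) ∈ S
    · intro j
      exact forced_up S 0 (by omega) (by omega) (Forced.mem h0) j (by omega)
    by_cases hl : (⟨n - 1, by omega⟩ : Fin n) ∈ S
    · intro j
      refine forced_down S (n - 1) (by omega) (by intro h; omega) (Forced.mem hl) j ?_
      have := j.isLt; omega
    obtain ⟨u, huS, v, hvS, hadj⟩ := hc h0 hl
    rw [path_adj] at hadj
    -- wlog u + 1 = v
    rcases hadj with hadj | hadj
    all_goals {
      first
      | (have key : ∃ p : Fin n, ∃ q : Fin n, p ∈ S ∧ q ∈ S ∧ (p : ℕ) + 1 = (q : ℕ) :=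
          ⟨u, v, huS, hvS, hadj⟩)
      | (have key : ∃ p : Fin n, ∃ q : Fin n, p ∈ S ∧ q ∈ S ∧ (p : ℕ) + 1 = (q : ℕ) :=
          ⟨v, u, hvS, huS, hadj⟩)
      obtain ⟨p, q, hpS, hqS, hpq⟩ := key
      intro j
      rcases Nat.lt_or_ge (j : ℕ) (q : ℕ) with h | h
      · refine forced_down S (p : ℕ) p.isLt ?_ ?_ j (by omega)
        · intro _
          have : (⟨(p : ℕ) + 1, by omega⟩ : Fin n) = q := by
            apply Fin.ext; show (p : ℕ) + 1 = (q : ℕ); omega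
          rw [this]; exact Forced.mem hqS
        · have : (⟨(p : ℕ), p.isLt⟩ : Fin n) = p := Fin.ext rfl
          rw [this]; exact Forced.mem hpS
      · refine forced_up S (q : ℕ) q.isLt ?_ ?_ j h
        · intro _
          have : (⟨(q : ℕ) - 1, by omega⟩ : Fin n) = p := by
            apply Fin.ext; show (q : ℕ) - 1 = (p : ℕ); omega
          rw [this]; exact Forced.mem hpS
        · have : (⟨(q : ℕ), q.isLt⟩ : Fin n) = q := Fin.ext rfl
          rw [this]; exact Forced.mem hqS
    }
  · rintro ⟨h0, hl, hadj⟩ hz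
    exact h0 (forced_mem S hn h0 hl hadj _ (hz ⟨0, by omega⟩))

def cnt (m i : ℕ) : ℕ :=
  ((Finset.Icc 1 m).powerset.filter (fun S => S.card = i ∧ ∀ a ∈ S, a + 1 ∉ S)).card

lemma cnt_zero (m : ℕ) : cnt m 0 = 1 := by
  unfold cnt
  rw [show ((Finset.Icc 1 m).powerset.filter
      (fun S => S.card = 0 ∧ ∀ a ∈ S, a + 1 ∉ S)) = {∅} from ?_]
  · rfl
  ext S
  simp only [Finset.mem_filter, Finset.mem_powerset, Finset.mem_singleton, Finset.card_eq_zero]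
  constructor
  · rintro ⟨-, rfl, -⟩; rfl
  · rintro rfl; simp

lemma cnt_zero_left (i : ℕ) : cnt 0 (i + 1) = 0 := by
  unfold cnt
  rw [Finset.card_eq_zero]
  ext S
  simp only [Finset.mem_filter, Finset.mem_powerset, Finset.notMem_empty, iff_false]
  rintro ⟨hS, hc, -⟩
  have : S = ∅ := by
    rw [← Finset.subset_empty]
    simpa using hS
  subst this
  simp at hc

lemma cnt_one (i : ℕ) : cnt 1 (i + 1) = if i = 0 then 1 else 0 := by
  unfold cnt
  have hpow : (Finset.Icc 1 1) = {1} := rfl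
  rcases Nat.eq_zero_or_pos i with rfl | hi
  · simp only [if_pos rfl]
    rw [show ((Finset.Icc 1 1).powerset.filter
        (fun S => S.card = 1 ∧ ∀ a ∈ S, a + 1 ∉ S)) = {{1}} from ?_]
    · rfl
    ext S
    simp only [Finset.mem_filter, Finset.mem_powerset, Finset.mem_singleton, hpow]
    constructor
    · rintro ⟨hS, hc, -⟩
      exact Finset.eq_of_subset_of_card_le hS (by simp [hc])
    · rintro rfl
      refine ⟨le_refl _, rfl, ?_⟩
      intro a ha
      simp at ha
      subst ha
      simp
  · rw [if_neg (by omega), Finset.card_eq_zero]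
    ext S
    simp only [Finset.mem_filter, Finset.mem_powerset, Finset.notMem_empty, iff_false, hpow]
    rintro ⟨hS, hc, -⟩
    have := Finset.card_le_card hS
    simp at this
    omega

lemma cnt_rec (m i : ℕ) : cnt (m + 2) (i + 1) = cnt (m + 1) (i + 1) + cnt m i := by
  classical
  unfold cnt
  set P : Finset ℕ → Prop := fun S => S.card = i + 1 ∧ ∀ a ∈ S, a + 1 ∉ S with hP
  rw [← Finset.card_filter_add_card_filter_not
    (p := fun S => (m + 2) ∈ S) (s := (Finset.Icc 1 (m + 2)).powerset.filter P)]
  rw [add_comm]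
  congr 1
  · -- sets not containing m+2  =  cnt (m+1) (i+1)
    congr 1
    ext S
    simp only [Finset.mem_filter, Finset.mem_powerset, hP]
    constructor
    · rintro ⟨⟨h1, h2⟩, h3⟩
      refine ⟨fun x hx => ?_, h2⟩
      have := h1 hx
      simp only [Finset.mem_Icc] at *
      have : x ≠ m + 2 := fun h => h3 (h ▸ hx)
      omega
    · rintro ⟨h1, h2⟩
      refine ⟨⟨fun x hx => ?_, h2⟩, fun h => ?_⟩
      · have := h1 hx; simp only [Finset.mem_Icc] at *; omega
      · have := h1 h; simp only [Finset.mem_Icc] at this; omega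
  · -- sets containing m+2  ≃  cnt m i via erase/insert
    refine Finset.card_bij' (fun S _ => S.erase (m + 2))
      (fun S _ => insert (m + 2) S) ?_ ?_ ?_ ?_
    · -- maps into target
      intro S hS
      simp only [Finset.mem_filter, Finset.mem_powerset, hP] at hS ⊢
      obtain ⟨⟨hsub, hcard, hcons⟩, hmem⟩ := hS
      refine ⟨fun x hx => ?_, ?_, ?_⟩
      · rw [Finset.mem_erase] at hx
        obtain ⟨hx1, hx2⟩ := hx
        have := hsub hx2
        simp only [Finset.mem_Icc] at *
        have hxm1 : x ≠ m + 1 := by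
          rintro rfl
          exact hcons _ hx2 hmem
        omega
      · rw [Finset.card_erase_of_mem hmem, hcard]; omega
      · intro a ha
        rw [Finset.mem_erase] at ha
        intro hmem2
        exact hcons a ha.2 (Finset.mem_of_mem_erase hmem2)
    · -- reverse maps into source
      intro S hS
      simp only [Finset.mem_filter, Finset.mem_powerset, hP] at hS ⊢
      obtain ⟨hsub, hcard, hcons⟩ := hS
      have hnm : (m + 2) ∉ S := by
        intro h; have := hsub h; simp only [Finset.mem_Icc] at this; omega
      refine ⟨⟨fun x hx => ?_, ?_, ?_⟩, Finset.mem_insert_self _ _⟩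
      · rcases Finset.mem_insert.mp hx with rfl | hx
        · simp only [Finset.mem_Icc]; omega
        · have := hsub hx; simp only [Finset.mem_Icc] at *; omega
      · rw [Finset.card_insert_of_notMem hnm, hcard]
      · intro a ha
        rcases Finset.mem_insert.mp ha with rfl | ha
        · intro h
          rcases Finset.mem_insert.mp h with h | h
          · omega
          · have := hsub h; simp only [Finset.mem_Icc] at this; omega
        · intro h
          rcases Finset.mem_insert.mp h with h | h
          · have := hsub ha; simp only [Finset.mem_Icc] at this; omega
          · exact hcons a ha h
    · intro S hS
      simp only [Finset.mem_filter] at hS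
      exact Finset.insert_erase hS.2
    · intro S hS
      simp only [Finset.mem_filter, Finset.mem_powerset, hP] at hS
      apply Finset.erase_insert
      intro h
      have := hS.1 h
      simp only [Finset.mem_Icc] at this
      omega

lemma cnt_eq (m i : ℕ) : cnt m i = (m + 1 - i).choose i := by
  induction m using Nat.strong_induction_on generalizing i with
  | _ m ih =>
    match m, i with
    | m, 0 => simpa using cnt_zero m
    | 0, i + 1 =>
      rw [cnt_zero_left]
      rw [show 0 + 1 - (i + 1) = 0 by omega]
      simp [Nat.choose_eq_zero_of_lt]
    | 1, i + 1 =>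
      rw [cnt_one]
      rcases Nat.eq_zero_or_pos i with rfl | hi
      · simp
      · rw [if_neg (by omega), show 1 + 1 - (i + 1) = 1 - i by omega]
        have : 1 - i ≤ i := by omega
        rcases Nat.eq_zero_or_pos (1 - i) with h | h
        · rw [h]; exact (Nat.choose_eq_zero_of_lt (by omega)).symm
        · have hi1 : i = 1 := by omega
          subst hi1
          rfl
    | (m + 2), (i + 1) =>
      rw [cnt_rec, ih (m + 1) (by omega), ih m (by omega)]
      rcases le_or_gt (i + 1) (m + 2) with h | h
      · rw [show m + 1 + 1 - (i + 1) = m + 1 - i by omega,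
          show m + 2 + 1 - (i + 1) = (m + 1 - i) + 1 by omega,
          Nat.choose_succ_succ]
        ring
      · obtain ⟨i', rfl⟩ : ∃ i', i = i' + 1 := ⟨i - 1, by omega⟩
        rw [show m + 1 + 1 - (i' + 1 + 1) = 0 by omega,
          show m + 1 - (i' + 1) = 0 by omega,
          show m + 2 + 1 - (i' + 1 + 1) = 0 by omega]
        simp

lemma image_cond_iff {n : ℕ} (hn : 1 ≤ n) (S : Finset (Fin n)) :
    ((⟨0, by exact Nat.lt_of_lt_of_le Nat.zero_lt_one hn⟩ : Fin n) ∉ S ∧ (⟨n - 1, by exact Nat.sub_lt hn Nat.zero_lt_one⟩ : Fin n) ∉ S ∧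
        ∀ u ∈ S, ∀ v ∈ S, ¬ (pathG n).Adj u v) ↔
    (S.image Fin.val ⊆ Finset.Icc 1 (n - 2) ∧
      ∀ a ∈ S.image Fin.val, a + 1 ∉ S.image Fin.val) := by
  constructor
  · rintro ⟨h0, hl, hadj⟩
    constructor
    · intro x hx
      simp only [Finset.mem_image] at hx
      obtain ⟨u, huS, rfl⟩ := hx
      have hu0 : (u : ℕ) ≠ 0 := by
        rintro h
        exact h0 (by rwa [show (⟨0, by omega⟩ : Fin n) = u by
          apply Fin.ext; show (0 : ℕ) = (u : ℕ); omega])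
      have hul : (u : ℕ) ≠ n - 1 := by
        rintro h
        exact hl (by rwa [show (⟨n - 1, by omega⟩ : Fin n) = u by
          apply Fin.ext; show (n - 1 : ℕ) = (u : ℕ); omega])
      have := u.isLt
      simp only [Finset.mem_Icc]
      omega
    · intro a ha hb
      simp only [Finset.mem_image] at ha hb
      obtain ⟨u, huS, rfl⟩ := ha
      obtain ⟨v, hvS, hv⟩ := hb
      exact hadj u huS v hvS ((path_adj u v).2 (Or.inl hv.symm))
  · rintro ⟨hsub, hcons⟩
    refine ⟨?_, ?_, ?_⟩
    · intro h0
      have : (0 : ℕ) ∈ S.image Fin.val := Finset.mem_image.2 ⟨_, h0, rfl⟩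
      have := hsub this
      simp only [Finset.mem_Icc] at this
      omega
    · intro hl
      have : (n - 1 : ℕ) ∈ S.image Fin.val := Finset.mem_image.2 ⟨_, hl, rfl⟩
      have := hsub this
      simp only [Finset.mem_Icc] at this
      omega
    · intro u huS v hvS hadj
      rw [path_adj] at hadj
      rcases hadj with h | h
      · exact hcons (u : ℕ) (Finset.mem_image.2 ⟨_, huS, rfl⟩)
          (h ▸ Finset.mem_image.2 ⟨_, hvS, rfl⟩)
      · exact hcons (v : ℕ) (Finset.mem_image.2 ⟨_, hvS, rfl⟩)
          (h ▸ Finset.mem_image.2 ⟨_, huS, rfl⟩)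

/-- For the path `P_n` (`n ≥ 1`), a set fails to be a zero forcing set iff it
contains no end-vertex and no two adjacent vertices; the number of such sets of size `i`
is `C(n−i−1,i)`. -/
theorem path_non_forcing (n i : ℕ) (hn : 1 ≤ n) :
    (∀ S : Finset (Fin n), ¬ (pathG n).IsZeroForcingSet ↑S ↔
      ((⟨0, by omega⟩ : Fin n) ∉ S ∧ (⟨n - 1, by omega⟩ : Fin n) ∉ S ∧
        ∀ u ∈ S, ∀ v ∈ S, ¬ (pathG n).Adj u v)) ∧
    Nat.card {S : Finset (Fin n) // S.card = i ∧ ¬ (pathG n).IsZeroForcingSet ↑S} =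
      (n - i - 1).choose i := by
  classical
  constructor
  · intro S
    exact not_zfs_iff hn (↑S : Set (Fin n))
  · have key : Nat.card {S : Finset (Fin n) // S.card = i ∧ ¬ (pathG n).IsZeroForcingSet ↑S}
        = cnt (n - 2) i := by
      rw [Nat.card_eq_fintype_card, Fintype.card_subtype]
      unfold cnt
      refine Finset.card_bij' (fun S _ => S.image Fin.val)
        (fun T _ => Finset.univ.filter (fun v : Fin n => (v : ℕ) ∈ T)) ?_ ?_ ?_ ?_
      · intro S hS
        simp only [Finset.mem_filter, Finset.mem_univ, true_and] at hS
        obtain ⟨hcard, hz⟩ := hS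
        rw [not_zfs_iff hn] at hz
        simp only [Finset.mem_coe] at hz
        rw [image_cond_iff hn] at hz
        simp only [Finset.mem_filter, Finset.mem_powerset]
        exact ⟨hz.1, by rw [Finset.card_image_of_injective _ Fin.val_injective, hcard], hz.2⟩
      · intro T hT
        simp only [Finset.mem_filter, Finset.mem_powerset] at hT
        obtain ⟨hsub, hcard, hcons⟩ := hT
        have himg : (Finset.univ.filter (fun v : Fin n => (v : ℕ) ∈ T)).image Fin.val = T := by
          ext a
          simp only [Finset.mem_image, Finset.mem_filter, Finset.mem_univ, true_and]
          constructor
          · rintro ⟨v, hv, rfl⟩; exact hv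
          · intro ha
            have := hsub ha
            simp only [Finset.mem_Icc] at this
            exact ⟨⟨a, by omega⟩, ha, rfl⟩
        simp only [Finset.mem_filter, Finset.mem_univ, true_and]
        constructor
        · rw [← Finset.card_image_of_injective _ Fin.val_injective, himg, hcard]
        · rw [not_zfs_iff hn]
          simp only [Finset.mem_coe]
          rw [image_cond_iff hn, himg]
          exact ⟨hsub, hcons⟩
      · intro S hS
        ext v
        simp only [Finset.mem_filter, Finset.mem_univ, true_and, Finset.mem_image]
        constructor
        · rintro ⟨u, huS, hu⟩
          rwa [← Fin.val_injective hu]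
        · intro hv; exact ⟨v, hv, rfl⟩
      · intro T hT
        simp only [Finset.mem_filter, Finset.mem_powerset] at hT
        ext a
        simp only [Finset.mem_image, Finset.mem_filter, Finset.mem_univ, true_and]
        constructor
        · rintro ⟨v, hv, rfl⟩; exact hv
        · intro ha
          have := hT.1 ha
          simp only [Finset.mem_Icc] at this
          exact ⟨⟨a, by omega⟩, ha, rfl⟩
    rw [key, cnt_eq]
    rcases Nat.lt_or_ge n 2 with h2 | h2
    · have hn1 : n = 1 := by omega
      subst hn1
      rcases i with _ | i
      · simp
      · congr 1
        omega
    · congr 1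
      omega
end

section
/- Given integers n > k ≥ m ≥ 3, the number of k-element subsets S of the vertices of the cycle C_n such that the induced subgraph C_n[S] contains a path on m vertices (i.e., at least m of the chosen vertices are consecutive on the cycle) equals Σ_{t=1}^{n} (−1)^{t−1} (n/t) C(n−mt−1, t−1) C(n−(m+1)t, k−mt). -/
open Finset


namespace CC


def lin (L N j : ℕ) : Finset (Finset ℕ) :=
  ((range N).powersetCard j).filter
    (fun T => (∀ x ∈ T, x + L ≤ N) ∧ (∀ x ∈ T, ∀ y ∈ T, x < y → x + L ≤ y))

lemma mem_lin {L N j : ℕ} {T : Finset ℕ} :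
    T ∈ lin L N j ↔ (T ⊆ range N ∧ T.card = j) ∧
      (∀ x ∈ T, x + L ≤ N) ∧ (∀ x ∈ T, ∀ y ∈ T, x < y → x + L ≤ y) := by
  simp [lin, mem_filter, mem_powersetCard]

lemma choose_rec {L N j : ℕ} (hL : 1 ≤ L) (hLN : L ≤ N) :
    (N - (L-1)*(j+1)).choose (j+1)
      = (N - L - (L-1)*j).choose j + (N - 1 - (L-1)*(j+1)).choose (j+1) := by
  rcases le_or_gt (1 + (L-1)*(j+1)) N with h | h
  · have h1 : N - (L-1)*(j+1) = (N - 1 - (L-1)*(j+1)) + 1 := by omega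
    have h2 : N - L - (L-1)*j = N - 1 - (L-1)*(j+1) := by
      have : (L-1)*(j+1) = (L-1)*j + (L-1) := by ring
      omega
    rw [h1, h2, Nat.choose_succ_succ]
  · have h0 : N - (L-1)*(j+1) = 0 := by omega
    have h1 : N - 1 - (L-1)*(j+1) = 0 := by omega
    rcases Nat.eq_zero_or_pos j with rfl | hj
    · exfalso; omega
    · have h2 : N - L - (L-1)*j = 0 := by
        have : (L-1)*(j+1) = (L-1)*j + (L-1) := by ring
        omega
      rw [h0, h1, h2]
      simp [Nat.choose_eq_zero_of_lt hj]

lemma lin_card (L : ℕ) (hL : 1 ≤ L) : ∀ N j, (lin L N j).card = (N - (L-1)*j).choose j := by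
  intro N
  induction N using Nat.strong_induction_on with
  | _ N ih =>
    intro j
    rcases j with _ | j
    · have : lin L N 0 = {∅} := by
        ext T
        simp only [mem_lin, mem_singleton]
        constructor
        · rintro ⟨⟨-, hc⟩, -⟩; exact card_eq_zero.1 hc
        · rintro rfl; simp
      simp [this]
    · rcases Nat.eq_zero_or_pos N with rfl | hN
      · have : lin L 0 (j+1) = ∅ := by
          ext T
          simp only [mem_lin, Finset.notMem_empty, iff_false, not_and]
          rintro ⟨hs, hc⟩
          simp only [range_zero, subset_empty] at hs
          subst hs; simp at hc
        rw [this, card_empty, Nat.zero_sub, Nat.choose_eq_zero_of_lt (by omega)]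
      have hsplit := card_filter_add_card_filter_not
        (s := lin L N (j+1)) (p := fun T => 0 ∈ T)
      have hpos : ((lin L N (j+1)).filter (fun T => ¬ 0 ∈ T)).card = (lin L (N-1) (j+1)).card := by
        apply card_nbij' (fun T => T.image (· - 1)) (fun T => T.image (· + 1))
        · intro T hT
          simp only [Finset.mem_coe] at hT ⊢
          simp only [mem_filter, mem_lin] at hT
          obtain ⟨⟨⟨hsub, hcard⟩, h1, h2⟩, h0⟩ := hT
          have hge : ∀ x ∈ T, 1 ≤ x := by
            intro x hx; rcases Nat.eq_zero_or_pos x with rfl | h; exact absurd hx h0; exact h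
          rw [mem_lin]
          refine ⟨⟨?_, ?_⟩, ?_, ?_⟩
          · intro y hy
            simp only [mem_image] at hy
            obtain ⟨x, hx, rfl⟩ := hy
            have := mem_range.1 (hsub hx)
            have := hge x hx
            exact mem_range.2 (by omega)
          · have hinj : Set.InjOn (· - 1) T := by
              intro x hx y hy hxy
              have := hge x hx; have := hge y hy
              try dsimp only at hxy
              omega
            rw [card_image_of_injOn hinj, hcard]
          · intro y hy
            simp only [mem_image] at hy
            obtain ⟨x, hx, rfl⟩ := hy
            have := h1 x hx; have := hge x hx; omega
          · intro y hy z hz hyz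
            simp only [mem_image] at hy hz
            obtain ⟨x, hx, rfl⟩ := hy
            obtain ⟨w, hw, rfl⟩ := hz
            try dsimp only at hyz ⊢
            have := hge x hx; have := hge w hw
            have := h2 x hx w hw (by omega)
            omega
        · intro T hT
          simp only [Finset.mem_coe] at hT ⊢
          rw [mem_lin] at hT
          obtain ⟨⟨hsub, hcard⟩, h1, h2⟩ := hT
          simp only [mem_filter, mem_lin]
          refine ⟨⟨⟨?_, ?_⟩, ?_, ?_⟩, ?_⟩
          · intro y hy
            simp only [mem_image] at hy
            obtain ⟨x, hx, rfl⟩ := hy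
            have := mem_range.1 (hsub hx)
            exact mem_range.2 (by omega)
          · have hinj : Set.InjOn (· + 1) T := by
              intro x _ y _ h
              try dsimp only at h
              omega
            rw [card_image_of_injOn hinj, hcard]
          · intro y hy
            simp only [mem_image] at hy
            obtain ⟨x, hx, rfl⟩ := hy
            have := h1 x hx
            have := mem_range.1 (hsub hx)
            omega
          · intro y hy z hz hyz
            simp only [mem_image] at hy hz
            obtain ⟨x, hx, rfl⟩ := hy
            obtain ⟨w, hw, rfl⟩ := hz
            try dsimp only at hyz ⊢
            have := h2 x hx w hw (by omega)
            omega
          · simp only [mem_image]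
            rintro ⟨x, hx, h⟩
            omega
        · intro T hT
          simp only [Finset.mem_coe] at hT ⊢
          simp only [mem_filter, mem_lin] at hT
          obtain ⟨⟨⟨hsub, hcard⟩, h1, h2⟩, h0⟩ := hT
          have hge : ∀ x ∈ T, 1 ≤ x := by
            intro x hx; rcases Nat.eq_zero_or_pos x with rfl | h; exact absurd hx h0; exact h
          rw [image_image]
          refine Eq.trans (image_congr ?_) image_id
          intro x hx
          have := hge x hx
          simp only [Function.comp_apply, id_eq]
          omega
        · intro T hT
          simp only [Finset.mem_coe] at hT ⊢
          rw [image_image]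
          refine Eq.trans (image_congr ?_) image_id
          intro x hx
          simp only [Function.comp_apply, id_eq]
          omega
      rcases lt_or_ge N L with hNL | hNL
      · -- N < L : the part with 0 ∈ T is empty
        have e1 : (lin L N (j+1)).filter (fun T => 0 ∈ T) = ∅ := by
          ext T
          simp only [mem_filter, mem_lin, Finset.notMem_empty, iff_false, not_and]
          rintro ⟨-, h1, -⟩ h0
          have := h1 0 h0; omega
        have hval : (N - (L-1)*(j+1)).choose (j+1) = ((N-1) - (L-1)*(j+1)).choose (j+1) := by
          rcases Nat.eq_zero_or_pos ((N - (L-1)*(j+1))) with h | h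
          · rw [h, Nat.choose_eq_zero_of_lt (Nat.succ_pos j),
              show (N-1) - (L-1)*(j+1) = 0 by omega,
              Nat.choose_eq_zero_of_lt (Nat.succ_pos j)]
          · exfalso
            have : (L-1) ≤ (L-1)*(j+1) := Nat.le_mul_of_pos_right _ (by omega)
            omega
        have h00 : ((lin L N (j+1)).filter (fun T => 0 ∈ T)).card = 0 := by
          rw [e1]; exact card_empty
        have hc2 := ih (N-1) (by omega) (j+1)
        omega
      have hzer : ((lin L N (j+1)).filter (fun T => 0 ∈ T)).card = (lin L (N-L) j).card := by
        apply card_nbij' (fun T => (T.erase 0).image (· - L))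
          (fun T => insert 0 (T.image (· + L)))
        · intro T hT
          simp only [Finset.mem_coe] at hT ⊢
          simp only [mem_filter, mem_lin] at hT
          obtain ⟨⟨⟨hsub, hcard⟩, h1, h2⟩, h0⟩ := hT
          have hge : ∀ x ∈ T.erase 0, L ≤ x := by
            intro x hx
            rw [mem_erase] at hx
            have := h2 0 h0 x hx.2 (by omega)
            omega
          rw [mem_lin]
          refine ⟨⟨?_, ?_⟩, ?_, ?_⟩
          · intro y hy
            simp only [mem_image] at hy
            obtain ⟨x, hx, rfl⟩ := hy
            have := mem_range.1 (hsub (mem_of_mem_erase hx))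
            have := hge x hx
            exact mem_range.2 (by omega)
          · have hinj : Set.InjOn (· - L) (T.erase 0) := by
              intro x hx y hy hxy
              have := hge x hx; have := hge y hy
              try dsimp only at hxy
              omega
            rw [card_image_of_injOn hinj, card_erase_of_mem h0, hcard]
            omega
          · intro y hy
            simp only [mem_image] at hy
            obtain ⟨x, hx, rfl⟩ := hy
            have := h1 x (mem_of_mem_erase hx); have := hge x hx; omega
          · intro y hy z hz hyz
            simp only [mem_image] at hy hz
            obtain ⟨x, hx, rfl⟩ := hy
            obtain ⟨w, hw, rfl⟩ := hz
            try dsimp only at hyz ⊢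
            have := hge x hx; have := hge w hw
            have := h2 x (mem_of_mem_erase hx) w (mem_of_mem_erase hw) (by omega)
            omega
        · intro T hT
          simp only [Finset.mem_coe] at hT ⊢
          rw [mem_lin] at hT
          obtain ⟨⟨hsub, hcard⟩, h1, h2⟩ := hT
          have h0i : (0:ℕ) ∉ T.image (· + L) := by
            simp only [mem_image]
            rintro ⟨x, hx, h⟩
            omega
          simp only [mem_filter, mem_lin]
          refine ⟨⟨⟨?_, ?_⟩, ?_, ?_⟩, by simp⟩
          · intro y hy
            rw [mem_insert] at hy
            rcases hy with rfl | hy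
            · exact mem_range.2 (by omega)
            simp only [mem_image] at hy
            obtain ⟨x, hx, rfl⟩ := hy
            have := mem_range.1 (hsub hx)
            exact mem_range.2 (by omega)
          · have hinj : Set.InjOn (· + L) T := by
              intro x _ y _ h
              try dsimp only at h
              omega
            rw [card_insert_of_notMem h0i, card_image_of_injOn hinj, hcard]
          · intro y hy
            rw [mem_insert] at hy
            rcases hy with rfl | hy
            · omega
            simp only [mem_image] at hy
            obtain ⟨x, hx, rfl⟩ := hy
            have := h1 x hx
            omega
          · intro y hy z hz hyz
            rw [mem_insert] at hy hz
            rcases hy with rfl | hy <;> rcases hz with rfl | hz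
            · omega
            · simp only [mem_image] at hz
              obtain ⟨w, hw, rfl⟩ := hz
              omega
            · simp only [mem_image] at hy
              obtain ⟨x, hx, rfl⟩ := hy
              omega
            · simp only [mem_image] at hy hz
              obtain ⟨x, hx, rfl⟩ := hy
              obtain ⟨w, hw, rfl⟩ := hz
              have := h2 x hx w hw (by omega)
              omega
        · intro T hT
          simp only [Finset.mem_coe] at hT ⊢
          simp only [mem_filter, mem_lin] at hT
          obtain ⟨⟨⟨hsub, hcard⟩, h1, h2⟩, h0⟩ := hT
          have hge : ∀ x ∈ T.erase 0, L ≤ x := by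
            intro x hx
            rw [mem_erase] at hx
            have := h2 0 h0 x hx.2 (by omega)
            omega
          rw [image_image]
          have : (T.erase 0).image ((· + L) ∘ (· - L)) = T.erase 0 := by
            refine Eq.trans (image_congr ?_) image_id
            intro x hx
            have := hge x hx
            simp only [Function.comp_apply, id_eq]
            omega
          rw [this, insert_erase h0]
        · intro T hT
          simp only [Finset.mem_coe] at hT ⊢
          have h0i : (0:ℕ) ∉ T.image (· + L) := by
            simp only [mem_image]
            rintro ⟨x, hx, h⟩
            omega
          rw [erase_insert h0i, image_image]
          refine Eq.trans (image_congr ?_) image_id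
          intro x hx
          simp only [Function.comp_apply, id_eq]
          omega
      have hc2 := ih (N-1) (by omega) (j+1)
      have hc3 := ih (N-L) (by omega) j
      have hcr := choose_rec (N := N) (j := j) hL hNL
      omega



open Fin.NatCast Fin.CommRing

variable {n m : ℕ} [NeZero n]

/-- block of `m` consecutive vertices starting at `a` -/
def blockF (n m : ℕ) [NeZero n] (a : Fin n) : Finset (Fin n) :=
  (range m).image (fun j : ℕ => a + (j : Fin n))

/-- block together with the preceding vertex -/
def arcF (n m : ℕ) [NeZero n] (a : Fin n) : Finset (Fin n) :=
  insert (a - 1) (blockF n m a)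

lemma mem_blockF {a x : Fin n} : x ∈ blockF n m a ↔ ∃ j, j < m ∧ x = a + (j : Fin n) := by
  simp [blockF, mem_image, eq_comm]

lemma self_mem_blockF (hm : 0 < m) (a : Fin n) : a ∈ blockF n m a :=
  mem_blockF.2 ⟨0, hm, by simp⟩

lemma natCast_inj_of_lt {i j : ℕ} (hi : i < n) (hj : j < n) (h : (i : Fin n) = (j : Fin n)) :
    i = j := by
  have := congrArg Fin.val h
  simpa [Nat.mod_eq_of_lt hi, Nat.mod_eq_of_lt hj] using this

lemma blockF_card (hmn : m < n) (a : Fin n) : (blockF n m a).card = m := by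
  have hinj : Set.InjOn (fun j : ℕ => a + (j : Fin n)) (range m) := by
    intro i hi j hj hij
    simp only [coe_range, Set.mem_Iio] at hi hj
    exact natCast_inj_of_lt (by omega) (by omega) (add_left_cancel hij)
  rw [blockF, card_image_of_injOn hinj, card_range]

lemma prev_not_mem_blockF (hmn : m < n) (a : Fin n) : a - 1 ∉ blockF n m a := by
  rw [mem_blockF]
  rintro ⟨j, hj, hx⟩
  have h1 : ((j + 1 : ℕ) : Fin n) = (0 : Fin n) := by
    push_cast
    linear_combination - hx
  have := natCast_inj_of_lt (show j + 1 < n by omega) (show 0 < n from Nat.pos_of_ne_zero (NeZero.ne n)) (by simpa using h1)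
  omega

lemma blockF_subset_arcF (a : Fin n) : blockF n m a ⊆ arcF n m a := subset_insert _ _

lemma arcF_card (hmn : m < n) (a : Fin n) : (arcF n m a).card = m + 1 := by
  rw [arcF, card_insert_of_notMem (prev_not_mem_blockF hmn a), blockF_card hmn]

lemma mem_arcF {a x : Fin n} : x ∈ arcF n m a ↔ ∃ i, i ≤ m ∧ x = a - 1 + (i : Fin n) := by
  rw [arcF, mem_insert, mem_blockF]
  constructor
  · rintro (rfl | ⟨j, hj, rfl⟩)
    · exact ⟨0, Nat.zero_le _, by simp⟩
    · exact ⟨j + 1, by omega, by push_cast; ring⟩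
  · rintro ⟨i, hi, rfl⟩
    rcases i with _ | j
    · left; simp
    · right; exact ⟨j, by omega, by push_cast; ring⟩

lemma add_sub_val (a b : Fin n) : a + (((b - a).val : ℕ) : Fin n) = b := by
  rw [Fin.cast_val_eq_self]; ring

lemma sub_val (a b : Fin n) : (a - b).val = (a.val + (n - b.val)) % n := by
  rw [Fin.sub_def]; simp [Nat.add_comm]

lemma not_disjoint_arcF_iff (hmn : m < n) {a b : Fin n} :
    ¬ Disjoint (arcF n m a) (arcF n m b) ↔
      ((b - a).val ≤ m ∨ n - m ≤ (b - a).val) := by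
  have hn : 0 < n := Nat.pos_of_ne_zero (NeZero.ne n)
  rw [Finset.not_disjoint_iff]
  constructor
  · rintro ⟨x, hxa, hxb⟩
    rw [mem_arcF] at hxa hxb
    obtain ⟨i, hi, rfl⟩ := hxa
    obtain ⟨j, hj, hx⟩ := hxb
    have h2 : (i : Fin n) = (b - a) + (j : Fin n) := by linear_combination hx
    have h3 := congrArg Fin.val h2
    rw [Fin.add_def] at h3
    simp only [Fin.val_natCast] at h3
    rw [Nat.mod_eq_of_lt (show i < n by omega), Nat.mod_eq_of_lt (show j < n by omega)] at h3
    set d := (b - a).val with hd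
    have hdn : d < n := (b - a).isLt
    rcases lt_or_ge (d + j) n with hlt | hge
    · rw [Nat.mod_eq_of_lt hlt] at h3; omega
    · rw [Nat.mod_eq_sub_mod hge, Nat.mod_eq_of_lt (by omega)] at h3; omega
  · set d := (b - a).val with hd
    have hdn : d < n := (b - a).isLt
    rintro (hdm | hdm)
    · refine ⟨b - 1, ?_, ?_⟩
      · rw [mem_arcF]
        refine ⟨d, hdm, ?_⟩
        have hb : a + ((d : ℕ) : Fin n) = b := add_sub_val a b
        linear_combination - hb
      · rw [mem_arcF]; exact ⟨0, Nat.zero_le _, by simp⟩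
    · refine ⟨a - 1, ?_, ?_⟩
      · rw [mem_arcF]; exact ⟨0, Nat.zero_le _, by simp⟩
      · rw [mem_arcF]
        refine ⟨n - d, by omega, ?_⟩
        have hb : a + ((d : ℕ) : Fin n) = b := add_sub_val a b
        have hnd : ((n - d : ℕ) : Fin n) + ((d : ℕ) : Fin n) = 0 := by
          rw [← Nat.cast_add, Nat.sub_add_cancel (le_of_lt hdn)]
          exact Fin.natCast_self n
        linear_combination hb - hnd

lemma disjoint_arcF_iff (hmn : m < n) {a b : Fin n} :
    Disjoint (arcF n m a) (arcF n m b) ↔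
      (m + 1 ≤ (b - a).val ∧ (b - a).val + m + 1 ≤ n) := by
  rw [← not_not (a := Disjoint _ _), not_disjoint_arcF_iff hmn]
  have := (b - a).isLt
  omega

lemma sub_ne_zero_val {a b : Fin n} (hab : a ≠ b) : (b - a).val ≠ 0 := by
  intro h
  exact hab (sub_eq_zero.mp (Fin.ext h : b - a = 0)).symm

lemma overlap_block (hmn : m < n) {a b : Fin n} (hab : a ≠ b)
    (hnd : ¬ Disjoint (arcF n m a) (arcF n m b)) :
    b - 1 ∈ blockF n m a ∨ a - 1 ∈ blockF n m b := by
  rw [not_disjoint_arcF_iff hmn] at hnd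
  set d := (b - a).val with hd
  have hdn : d < n := (b - a).isLt
  have hd0 : d ≠ 0 := sub_ne_zero_val hab
  have hb : a + ((d : ℕ) : Fin n) = b := add_sub_val a b
  rcases hnd with hdm | hdm
  · left
    rw [mem_blockF]
    refine ⟨d - 1, by omega, ?_⟩
    have : ((d - 1 : ℕ) : Fin n) = ((d : ℕ) : Fin n) - 1 := by
      push_cast [show 1 ≤ d by omega]
      ring
    rw [this]
    linear_combination - hb
  · right
    rw [mem_blockF]
    refine ⟨n - d - 1, by omega, ?_⟩
    have h1 : ((n - d - 1 : ℕ) : Fin n) = ((n - d : ℕ) : Fin n) - 1 := by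
      push_cast [show 1 ≤ n - d by omega]
      ring
    have hnd2 : ((n - d : ℕ) : Fin n) + ((d : ℕ) : Fin n) = 0 := by
      rw [← Nat.cast_add, Nat.sub_add_cancel (le_of_lt hdn)]
      exact Fin.natCast_self n
    rw [h1]
    linear_combination hb - hnd2

/-- the collection of "intersection" sets in inclusion–exclusion -/
def JF (n m k : ℕ) [NeZero n] (T : Finset (Fin n)) : Finset (Finset (Fin n)) :=
  univ.filter (fun S => S.card = k ∧ ∀ a ∈ T, blockF n m a ⊆ S ∧ a - 1 ∉ S)

def validT (n m : ℕ) [NeZero n] (T : Finset (Fin n)) : Prop :=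
  ∀ a ∈ T, ∀ b ∈ T, a ≠ b → Disjoint (arcF n m a) (arcF n m b)

instance : DecidablePred (validT n m) := fun T => by unfold validT; infer_instance

lemma JF_eq_empty_of_not_valid (hmn : m < n) {k : ℕ} {T : Finset (Fin n)}
    (hT : ¬ validT n m T) : JF n m k T = ∅ := by
  unfold validT at hT
  push_neg at hT
  obtain ⟨a, ha, b, hb, hab, hnd⟩ := hT
  ext S
  simp only [JF, mem_filter, mem_univ, true_and, Finset.notMem_empty, iff_false, not_and]
  rintro - hS
  rcases overlap_block hmn hab hnd with h | h
  · exact absurd ((hS a ha).1 h) (hS b hb).2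
  · exact absurd ((hS b hb).1 h) (hS a ha).2

lemma pairwise_disjoint_blocks (hmn : m < n) {T : Finset (Fin n)} (hT : validT n m T) :
    ∀ a ∈ T, ∀ b ∈ T, a ≠ b → Disjoint (blockF n m a) (blockF n m b) := by
  intro a ha b hb hab
  exact Finset.disjoint_of_subset_left (blockF_subset_arcF a)
    (Finset.disjoint_of_subset_right (blockF_subset_arcF b) (hT a ha b hb hab))

lemma card_biUnion_blockF (hmn : m < n) {T : Finset (Fin n)} (hT : validT n m T) :
    (T.biUnion (blockF n m)).card = m * T.card := by
  rw [card_biUnion, Finset.sum_congr rfl (fun a _ => blockF_card hmn a), Finset.sum_const,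
    smul_eq_mul, mul_comm]
  intro a ha b hb hab
  exact pairwise_disjoint_blocks hmn hT a ha b hb hab

lemma card_biUnion_arcF (hmn : m < n) {T : Finset (Fin n)} (hT : validT n m T) :
    (T.biUnion (arcF n m)).card = (m + 1) * T.card := by
  rw [card_biUnion, Finset.sum_congr rfl (fun a _ => arcF_card hmn a), Finset.sum_const,
    smul_eq_mul, mul_comm]
  intro a ha b hb hab
  exact hT a ha b hb hab

lemma JF_card_eq_zero_of_lt (hmn : m < n) {k : ℕ} {T : Finset (Fin n)}
    (hT : validT n m T) (hk : k < m * T.card) : JF n m k T = ∅ := by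
  ext S
  simp only [JF, mem_filter, mem_univ, true_and, Finset.notMem_empty, iff_false, not_and]
  rintro hcard hS
  have hsub : T.biUnion (blockF n m) ⊆ S := by
    intro x hx
    rw [mem_biUnion] at hx
    obtain ⟨a, ha, hx⟩ := hx
    exact (hS a ha).1 hx
  have := card_le_card hsub
  rw [card_biUnion_blockF hmn hT, hcard] at this
  omega

lemma JF_card_of_valid (hmn : m < n) {k : ℕ} {T : Finset (Fin n)}
    (hT : validT n m T) (hmt : m * T.card ≤ k) :
    (JF n m k T).card = (n - (m+1) * T.card).choose (k - m * T.card) := by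
  classical
  set B := T.biUnion (blockF n m) with hB
  set U := T.biUnion (arcF n m) with hU
  have hBU : B ⊆ U := biUnion_mono (fun a _ => blockF_subset_arcF a)
  have hBcard : B.card = m * T.card := card_biUnion_blockF hmn hT
  have hUcard : U.card = (m+1) * T.card := card_biUnion_arcF hmn hT
  have key : (JF n m k T).card = ((univ \ U).powersetCard (k - m * T.card)).card := by
    apply card_nbij' (fun S => S \ B) (fun R => R ∪ B)
    · intro S hS
      simp only [Finset.mem_coe] at hS ⊢
      simp only [JF, mem_filter, mem_univ, true_and] at hS
      obtain ⟨hcard, hcond⟩ := hS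
      have hBsub : B ⊆ S := by
        intro x hx
        rw [hB, mem_biUnion] at hx
        obtain ⟨a, ha, hx⟩ := hx
        exact (hcond a ha).1 hx
      rw [mem_powersetCard]
      constructor
      · intro x hx
        rw [mem_sdiff] at hx ⊢
        refine ⟨mem_univ x, ?_⟩
        intro hxU
        rw [hU, mem_biUnion] at hxU
        obtain ⟨a, ha, hxa⟩ := hxU
        rw [arcF, mem_insert] at hxa
        rcases hxa with rfl | hxa
        · exact (hcond a ha).2 hx.1
        · exact hx.2 (mem_biUnion.2 ⟨a, ha, hxa⟩)
      · rw [card_sdiff_of_subset hBsub, hcard, hBcard]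
    · intro R hR
      simp only [Finset.mem_coe] at hR ⊢
      rw [mem_powersetCard] at hR
      obtain ⟨hRsub, hRcard⟩ := hR
      have hRU : ∀ x ∈ R, x ∉ U := by
        intro x hx hxU
        have := hRsub hx
        rw [mem_sdiff] at this
        exact this.2 hxU
      simp only [JF, mem_filter, mem_univ, true_and]
      constructor
      · rw [card_union_of_disjoint, hRcard, hBcard]
        · omega
        · rw [Finset.disjoint_left]
          intro x hx
          exact fun hxB => hRU x hx (hBU hxB)
      · intro a ha
        constructor
        · intro x hx
          exact mem_union_right _ (mem_biUnion.2 ⟨a, ha, hx⟩)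
        · rw [mem_union]
          rintro (h | h)
          · exact hRU _ h (mem_biUnion.2 ⟨a, ha, mem_insert_self _ _⟩)
          · rw [hB, mem_biUnion] at h
            obtain ⟨b, hb, hxb⟩ := h
            by_cases hab : a = b
            · subst hab
              exact prev_not_mem_blockF hmn a hxb
            · have hdisj := hT a ha b hb hab
              rw [Finset.disjoint_left] at hdisj
              exact hdisj (mem_insert_self _ _) (blockF_subset_arcF b hxb)
    · intro S hS
      simp only [Finset.mem_coe] at hS ⊢
      simp only [JF, mem_filter, mem_univ, true_and] at hS
      have hBsub : B ⊆ S := by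
        intro x hx
        rw [hB, mem_biUnion] at hx
        obtain ⟨a, ha, hx⟩ := hx
        exact (hS.2 a ha).1 hx
      exact sdiff_union_of_subset hBsub
    · intro R hR
      simp only [Finset.mem_coe] at hR ⊢
      rw [mem_powersetCard] at hR
      apply union_sdiff_cancel_right
      rw [Finset.disjoint_left]
      intro x hx hxB
      have := hR.1 hx
      rw [mem_sdiff] at this
      exact this.2 (hBU hxB)
  rw [key, card_powersetCard, card_sdiff_of_subset (subset_univ U), card_univ, Fintype.card_fin, hUcard]

/-- the inclusion–exclusion events -/
def AF (n m k : ℕ) [NeZero n] (a : Fin n) : Finset (Finset (Fin n)) :=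
  univ.filter (fun S => S.card = k ∧ blockF n m a ⊆ S ∧ a - 1 ∉ S)

lemma exists_start (hm : 0 < m) {S : Finset (Fin n)} (hcard : S.card < n)
    {a : Fin n} (ha : blockF n m a ⊆ S) :
    ∃ b : Fin n, blockF n m b ⊆ S ∧ b - 1 ∉ S := by
  by_contra h
  push_neg at h
  have key : ∀ i : ℕ, blockF n m (a - (i : Fin n)) ⊆ S := by
    intro i
    induction i with
    | zero => simpa using ha
    | succ i ih =>
      intro x hx
      rw [mem_blockF] at hx
      obtain ⟨j, hj, rfl⟩ := hx
      rcases j with _ | j'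
      · have hb := h _ ih
        have he : a - ((i+1 : ℕ) : Fin n) + ((0:ℕ) : Fin n) = (a - (i : Fin n)) - 1 := by
          push_cast; ring
        rw [he]
        exact hb
      · have he : a - ((i+1:ℕ) : Fin n) + ((j'+1 : ℕ) : Fin n)
            = (a - (i : Fin n)) + ((j' : ℕ) : Fin n) := by
          push_cast; ring
        rw [he]
        exact ih (mem_blockF.2 ⟨j', by omega, rfl⟩)
  have huniv : ∀ v : Fin n, v ∈ S := by
    intro v
    have hv : a - (((a - v).val : ℕ) : Fin n) = v := by
      rw [Fin.cast_val_eq_self]; ring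
    have := key ((a - v).val)
    rw [hv] at this
    exact this (self_mem_blockF hm v)
  have : S = univ := eq_univ_of_forall huniv
  rw [this, card_univ, Fintype.card_fin] at hcard
  omega

lemma tgt_eq_biUnion {k : ℕ} (hm : 0 < m) (hk : k < n) :
    univ.filter (fun S : Finset (Fin n) => S.card = k ∧ ∃ a, blockF n m a ⊆ S)
      = univ.biUnion (AF n m k) := by
  ext S
  simp only [mem_filter, mem_univ, true_and, mem_biUnion, AF]
  constructor
  · rintro ⟨hcard, a, ha⟩
    obtain ⟨b, hb1, hb2⟩ := exists_start hm (by omega) ha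
    exact ⟨b, hcard, hb1, hb2⟩
  · rintro ⟨a, h1, h2, h3⟩
    exact ⟨h1, a, h2⟩

lemma inf'_AF {k : ℕ} {T : Finset (Fin n)} (hT : T.Nonempty) :
    T.inf' hT (AF n m k) = JF n m k T := by
  induction hT using Finset.Nonempty.cons_induction with
  | singleton a =>
    ext S
    simp [AF, JF, mem_filter, Finset.inf'_singleton]
  | cons a s ha hs ih =>
    rw [Finset.inf'_cons hs, ih]
    ext S
    simp only [inf_eq_inter, mem_inter, AF, JF, mem_filter, mem_univ, true_and,
      Finset.mem_cons]
    constructor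
    · rintro ⟨⟨h1, h2, h3⟩, h4, h5⟩
      refine ⟨h1, ?_⟩
      rintro b (rfl | hb)
      · exact ⟨h2, h3⟩
      · exact h5 b hb
    · rintro ⟨h1, h2⟩
      exact ⟨⟨h1, (h2 a (Or.inl rfl)).1, (h2 a (Or.inl rfl)).2⟩, h1,
        fun b hb => h2 b (Or.inr hb)⟩

/-- valid start-sets of size `t` -/
def VT (n m : ℕ) [NeZero n] (t : ℕ) : Finset (Finset (Fin n)) :=
  ((univ : Finset (Fin n)).powersetCard t).filter (validT n m)


lemma card_VT_filter {t : ℕ} (ht : 1 ≤ t) (hmn : m + 1 ≤ n) (a : Fin n) :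
    ((VT n m t).filter (fun T => a ∈ T)).card = (lin (m+1) (n - (m+1)) (t-1)).card := by
  have hmn' : m < n := by omega
  apply card_nbij' (fun T => (T.erase a).image (fun b => (b - a).val - (m+1)))
    (fun T' => insert a (T'.image (fun x : ℕ => a + ((x + (m+1) : ℕ) : Fin n))))
  · intro T hT
    simp only [Finset.mem_coe] at hT ⊢
    rw [mem_filter] at hT
    obtain ⟨hVT, haT⟩ := hT
    rw [VT, mem_filter, mem_powersetCard] at hVT
    obtain ⟨⟨-, hcard⟩, hval⟩ := hVT
    have hdb : ∀ b ∈ T.erase a, m + 1 ≤ (b - a).val ∧ (b - a).val + (m+1) ≤ n := by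
      intro b hb
      rw [mem_erase] at hb
      exact (disjoint_arcF_iff hmn').1 (hval a haT b hb.2 (Ne.symm hb.1))
    rw [mem_lin]
    refine ⟨⟨?_, ?_⟩, ?_, ?_⟩
    · intro y hy
      simp only [mem_image] at hy
      obtain ⟨b, hb, rfl⟩ := hy
      have := hdb b hb
      exact mem_range.2 (by omega)
    · have hinj : Set.InjOn (fun b => (b - a).val - (m+1)) (T.erase a) := by
        intro b hb c hc hbc
        have h1 := hdb b hb
        have h2 := hdb c hc
        have : (b - a).val = (c - a).val := by
          try dsimp only at hbc
          omega
        have hb2 := add_sub_val a b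
        have hc2 := add_sub_val a c
        rw [← hb2, ← hc2, this]
      rw [card_image_of_injOn hinj, card_erase_of_mem haT, hcard]
    · intro y hy
      simp only [mem_image] at hy
      obtain ⟨b, hb, rfl⟩ := hy
      have := hdb b hb
      omega
    · intro y hy z hz hyz
      simp only [mem_image] at hy hz
      obtain ⟨b, hb, rfl⟩ := hy
      obtain ⟨c, hc, rfl⟩ := hz
      try dsimp only at hyz ⊢
      have h1 := hdb b hb
      have h2 := hdb c hc
      have hbc : b ≠ c := by
        intro h
        subst h
        omega
      have hdisj := hval b (mem_of_mem_erase hb) c (mem_of_mem_erase hc) hbc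
      rw [disjoint_arcF_iff hmn'] at hdisj
      have hcb : c - b = (c - a) - (b - a) := by ring
      have hv : (c - b).val = ((c - a).val + (n - (b - a).val)) % n := by
        rw [hcb, sub_val]
      have hlt1 := (c - a).isLt
      have hlt2 := (b - a).isLt
      rw [Nat.mod_eq_sub_mod (by omega), Nat.mod_eq_of_lt (by omega)] at hv
      omega
  · intro T' hT'
    simp only [Finset.mem_coe] at hT' ⊢
    rw [mem_lin] at hT'
    obtain ⟨⟨hsub, hcard⟩, h1, h2⟩ := hT'
    have hn1 : 0 < n := Nat.pos_of_ne_zero (NeZero.ne n)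
    have hfv : ∀ x ∈ T', ((a + ((x + (m+1) : ℕ) : Fin n)) - a).val = x + (m+1) := by
      intro x hx
      have hxn : x + (m+1) < n := by
        have := h1 x hx
        omega
      have he : a + ((x + (m+1) : ℕ) : Fin n) - a = ((x + (m+1) : ℕ) : Fin n) := by ring
      rw [he, Fin.val_natCast, Nat.mod_eq_of_lt hxn]
    have hano : a ∉ T'.image (fun x : ℕ => a + ((x + (m+1) : ℕ) : Fin n)) := by
      simp only [mem_image]
      rintro ⟨x, hx, hax⟩
      have h0 := hfv x hx
      rw [hax] at h0
      simp only [sub_self, Fin.val_zero] at h0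
      omega
    have hpair : ∀ x ∈ T', Disjoint (arcF n m a) (arcF n m (a + ((x + (m+1) : ℕ) : Fin n))) := by
      intro x hx
      rw [disjoint_arcF_iff hmn', hfv x hx]
      have := h1 x hx
      omega
    have hpair2 : ∀ x ∈ T', ∀ y ∈ T', x < y →
        Disjoint (arcF n m (a + ((x + (m+1) : ℕ) : Fin n)))
          (arcF n m (a + ((y + (m+1) : ℕ) : Fin n))) := by
      intro x hx y hy hxy
      rw [disjoint_arcF_iff hmn']
      have hyx : (a + ((y + (m+1) : ℕ) : Fin n)) - (a + ((x + (m+1) : ℕ) : Fin n))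
          = ((y - x : ℕ) : Fin n) := by
        have harg : (y - x : ℕ) = (y + (m+1)) - (x + (m+1)) := by omega
        rw [harg, Nat.cast_sub (by omega)]
        ring
      rw [hyx, Fin.val_natCast, Nat.mod_eq_of_lt (by
        have := h1 y hy
        omega)]
      have := h2 x hx y hy hxy
      have := h1 y hy
      omega
    rw [mem_filter, VT, mem_filter, mem_powersetCard]
    refine ⟨⟨⟨subset_univ _, ?_⟩, ?_⟩, mem_insert_self a _⟩
    · have hinj : Set.InjOn (fun x : ℕ => a + ((x + (m+1) : ℕ) : Fin n)) T' := by
        intro x hx y hy hxy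
        try dsimp only at hxy
        have h1' := hfv x hx
        have h2' := hfv y hy
        rw [hxy] at h1'
        omega
      rw [card_insert_of_notMem hano, card_image_of_injOn hinj, hcard]
      omega
    · intro b hb c hc hbc
      rw [mem_insert] at hb hc
      rcases hb with rfl | hb <;> rcases hc with rfl | hc
      · exact absurd rfl hbc
      · simp only [mem_image] at hc
        obtain ⟨y, hy, rfl⟩ := hc
        exact hpair y hy
      · simp only [mem_image] at hb
        obtain ⟨x, hx, rfl⟩ := hb
        exact (hpair x hx).symm
      · simp only [mem_image] at hb hc
        obtain ⟨x, hx, rfl⟩ := hb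
        obtain ⟨y, hy, rfl⟩ := hc
        have hxy : x ≠ y := by
          rintro rfl
          exact hbc rfl
        rcases lt_or_gt_of_ne hxy with h | h
        · exact hpair2 x hx y hy h
        · exact (hpair2 y hy x hx h).symm
  · intro T hT
    simp only [Finset.mem_coe] at hT ⊢
    rw [mem_filter] at hT
    obtain ⟨hVT, haT⟩ := hT
    rw [VT, mem_filter, mem_powersetCard] at hVT
    obtain ⟨⟨-, hcard⟩, hval⟩ := hVT
    have hdb : ∀ b ∈ T.erase a, m + 1 ≤ (b - a).val ∧ (b - a).val + (m+1) ≤ n := by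
      intro b hb
      rw [mem_erase] at hb
      exact (disjoint_arcF_iff hmn').1 (hval a haT b hb.2 (Ne.symm hb.1))
    rw [image_image]
    have he : (T.erase a).image
        ((fun x : ℕ => a + ((x + (m+1) : ℕ) : Fin n)) ∘ (fun b => (b - a).val - (m+1)))
        = T.erase a := by
      refine Eq.trans (image_congr ?_) image_id
      intro b hb
      simp only [Function.comp_apply, id_eq]
      have := hdb b hb
      have harg : (b - a).val - (m+1) + (m+1) = (b - a).val := by omega
      rw [harg]
      exact add_sub_val a b
    rw [he, insert_erase haT]
  · intro T' hT'
    simp only [Finset.mem_coe] at hT' ⊢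
    rw [mem_lin] at hT'
    obtain ⟨⟨hsub, hcard⟩, h1, h2⟩ := hT'
    have hfv : ∀ x ∈ T', ((a + ((x + (m+1) : ℕ) : Fin n)) - a).val = x + (m+1) := by
      intro x hx
      have hxn : x + (m+1) < n := by
        have := h1 x hx
        omega
      have he : a + ((x + (m+1) : ℕ) : Fin n) - a = ((x + (m+1) : ℕ) : Fin n) := by ring
      rw [he, Fin.val_natCast, Nat.mod_eq_of_lt hxn]
    have hano : a ∉ T'.image (fun x : ℕ => a + ((x + (m+1) : ℕ) : Fin n)) := by
      simp only [mem_image]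
      rintro ⟨x, hx, hax⟩
      have h0 := hfv x hx
      rw [hax] at h0
      simp only [sub_self, Fin.val_zero] at h0
      omega
    rw [Finset.erase_insert hano, image_image]
    refine Eq.trans (image_congr ?_) image_id
    intro x hx
    simp only [Function.comp_apply, id_eq]
    rw [hfv x hx]
    omega

lemma VT_card {t : ℕ} (ht : 1 ≤ t) (hmn : m + 1 ≤ n) :
    t * (VT n m t).card = n * (n - m * t - 1).choose (t-1) := by
  have h1 : ∑ T ∈ VT n m t, T.card = (VT n m t).card * t := by
    rw [Finset.sum_congr rfl (fun T hT => ?_), Finset.sum_const, smul_eq_mul]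
    rw [VT, mem_filter, mem_powersetCard] at hT
    exact hT.1.2
  have h2 : ∀ T : Finset (Fin n), T.card = ∑ b : Fin n, if b ∈ T then 1 else 0 := by
    intro T
    rw [← Finset.card_filter]
    congr 1
    ext b
    simp
  have h3 : ∑ T ∈ VT n m t, T.card
      = ∑ b : Fin n, ((VT n m t).filter (fun T => b ∈ T)).card := by
    calc ∑ T ∈ VT n m t, T.card
        = ∑ T ∈ VT n m t, ∑ b : Fin n, if b ∈ T then 1 else 0 :=
          Finset.sum_congr rfl (fun T _ => h2 T)
      _ = ∑ b : Fin n, ∑ T ∈ VT n m t, if b ∈ T then 1 else 0 := Finset.sum_comm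
      _ = _ := Finset.sum_congr rfl (fun b _ => (Finset.card_filter _ _).symm)
  have h4 : ∀ b : Fin n, ((VT n m t).filter (fun T => b ∈ T)).card
      = (n - m * t - 1).choose (t-1) := by
    intro b
    rw [card_VT_filter ht hmn b, lin_card (m+1) (by omega)]
    congr 1
    have hmt : m * t = m * (t - 1) + m := by
      conv_lhs => rw [show t = (t - 1) + 1 by omega]
      ring
    have hsimp : m + 1 - 1 = m := rfl
    rw [hsimp]
    omega
  rw [h3] at h1
  rw [Finset.sum_congr rfl (fun b _ => h4 b), Finset.sum_const, smul_eq_mul,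
    card_univ, Fintype.card_fin] at h1
  rw [mul_comm]
  exact h1.symm

theorem consecutive_count' (n k m : ℕ) (hm : 3 ≤ m) (hmk : m ≤ k) (hkn : k < n) :
    (Nat.card {S : Finset (Fin n) // S.card = k ∧ ∃ a : Fin n, ∀ j, j < m →
        (⟨((a : ℕ) + j) % n, Nat.mod_lt _ (Nat.zero_lt_of_lt hkn)⟩ : Fin n) ∈ S} : ℚ) =
      ∑ t ∈ Finset.Icc 1 n, if m * t ≤ k then
        (-1 : ℚ) ^ (t - 1) * (n : ℚ) / (t : ℚ) *
          ((n - m * t - 1).choose (t - 1) : ℚ) *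
          ((n - (m + 1) * t).choose (k - m * t) : ℚ)
      else 0 := by
  haveI : NeZero n := ⟨by omega⟩
  have hmn' : m < n := by omega
  have hmn : m + 1 ≤ n := by omega
  -- Step A : identify the Nat.card with a filter card
  set p : Finset (Fin n) → Prop := fun S => S.card = k ∧ ∃ a : Fin n, ∀ j, j < m →
      (⟨((a : ℕ) + j) % n, Nat.mod_lt _ (by omega)⟩ : Fin n) ∈ S with hp
  have hmk2 : ∀ (a : Fin n) (j : ℕ),
      (⟨((a : ℕ) + j) % n, Nat.mod_lt _ (by omega)⟩ : Fin n) = a + (j : Fin n) := by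
    intro a j
    apply Fin.ext
    simp only [Fin.add_def, Fin.val_natCast]
    conv_lhs => rw [Nat.add_mod]
    conv_rhs => rw [Nat.add_mod]
    rw [Nat.mod_mod_of_dvd _ dvd_rfl]
  have hA : (Nat.card {S : Finset (Fin n) // p S})
      = (univ.filter (fun S => S.card = k ∧ ∃ a, blockF n m a ⊆ S)).card := by
    rw [Nat.card_eq_fintype_card, Fintype.card_subtype]
    congr 1
    apply filter_congr
    intro S _
    rw [hp]
    apply and_congr_right
    intro _
    apply exists_congr
    intro a
    constructor
    · intro h x hx
      rw [mem_blockF] at hx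
      obtain ⟨j, hj, rfl⟩ := hx
      have := h j hj
      rwa [hmk2 a j] at this
    · intro h j hj
      rw [hmk2 a j]
      exact h (mem_blockF.2 ⟨j, hj, rfl⟩)
  -- Step B : inclusion–exclusion
  have hIE := Finset.inclusion_exclusion_card_biUnion (univ : Finset (Fin n)) (AF n m k)
  have hIE2 : ((univ.biUnion (AF n m k)).card : ℤ)
      = ∑ T ∈ (univ : Finset (Fin n)).powerset.filter (·.Nonempty),
          (-1:ℤ)^(T.card+1) * ((JF n m k T).card : ℤ) := by
    rw [hIE]
    rw [← Finset.sum_coe_sort ((univ : Finset (Fin n)).powerset.filter (·.Nonempty))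
      (fun T => (-1:ℤ)^(T.card+1) * ((JF n m k T).card : ℤ))]
    apply Finset.sum_congr rfl
    intro t _
    rw [inf'_AF (mem_filter.1 t.2).2]
  -- Step C : regroup by size
  have hC : ∑ T ∈ (univ : Finset (Fin n)).powerset.filter (·.Nonempty),
        (-1:ℤ)^(T.card+1) * ((JF n m k T).card : ℤ)
      = ∑ t ∈ Icc 1 n, ∑ T ∈ (univ : Finset (Fin n)).powersetCard t,
          (-1:ℤ)^(t+1) * ((JF n m k T).card : ℤ) := by
    rw [Finset.sum_filter, Finset.powerset_card_disjiUnion]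
    erw [Finset.sum_disjiUnion]
    rw [card_univ, Fintype.card_fin]
    have hins : range (n+1) = insert 0 (Icc 1 n) := by
      ext x
      simp only [mem_range, mem_insert, mem_Icc]
      omega
    rw [hins, Finset.sum_insert (by simp [mem_Icc])]
    rw [powersetCard_zero, Finset.sum_singleton]
    rw [if_neg (by simp), zero_add]
    apply Finset.sum_congr rfl
    intro t ht
    apply Finset.sum_congr rfl
    intro T hT
    have hTc : T.card = t := (mem_powersetCard.1 hT).2
    have hne : T.Nonempty := card_pos.1 (by rw [hTc]; exact (mem_Icc.1 ht).1)
    rw [if_pos hne, hTc]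
  -- Step D : per-size evaluation
  have hD : ∀ t ∈ Icc 1 n, ∑ T ∈ (univ : Finset (Fin n)).powersetCard t,
        ((-1:ℤ)^(t+1) * ((JF n m k T).card : ℤ))
      = (-1:ℤ)^(t+1) * ((VT n m t).card : ℤ) *
          (if m * t ≤ k then (((n - (m+1)*t).choose (k - m*t) : ℕ) : ℤ) else 0) := by
    intro t ht
    rw [← Finset.sum_filter_add_sum_filter_not _ (validT n m)]
    have hz : ∑ T ∈ ((univ : Finset (Fin n)).powersetCard t).filter (fun T => ¬ validT n m T),
        ((-1:ℤ)^(t+1) * ((JF n m k T).card : ℤ)) = 0 := by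
      apply Finset.sum_eq_zero
      intro T hT
      rw [mem_filter] at hT
      rw [JF_eq_empty_of_not_valid hmn' hT.2]
      simp
    rw [hz, add_zero]
    by_cases hcase : m * t ≤ k
    · rw [if_pos hcase]
      have hconst : ∀ T ∈ ((univ : Finset (Fin n)).powersetCard t).filter (validT n m),
          ((-1:ℤ)^(t+1) * ((JF n m k T).card : ℤ))
            = (-1:ℤ)^(t+1) * (((n - (m+1)*t).choose (k - m*t) : ℕ) : ℤ) := by
        intro T hT
        rw [mem_filter, mem_powersetCard] at hT
        rw [JF_card_of_valid hmn' hT.2 (by rw [hT.1.2]; exact hcase), hT.1.2]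
      rw [Finset.sum_congr rfl hconst, Finset.sum_const, nsmul_eq_mul]
      rw [show ((univ : Finset (Fin n)).powersetCard t).filter (validT n m) = VT n m t from rfl]
      ring
    · rw [if_neg hcase, mul_zero]
      apply Finset.sum_eq_zero
      intro T hT
      rw [mem_filter, mem_powersetCard] at hT
      rw [JF_card_eq_zero_of_lt hmn' hT.2 (by rw [hT.1.2]; omega)]
      simp
  -- chain in ℤ
  have hZ : (((univ.filter (fun S : Finset (Fin n) => S.card = k ∧ ∃ a, blockF n m a ⊆ S)).card : ℕ) : ℤ)
      = ∑ t ∈ Icc 1 n, ((-1:ℤ)^(t+1) * ((VT n m t).card : ℤ) *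
          (if m * t ≤ k then (((n - (m+1)*t).choose (k - m*t) : ℕ) : ℤ) else 0)) := by
    rw [tgt_eq_biUnion (by omega : 0 < m) hkn, hIE2, hC]
    exact Finset.sum_congr rfl hD
  -- move to ℚ
  rw [hA]
  have hQ := congrArg (fun z : ℤ => (z : ℚ)) hZ
  push_cast at hQ
  rw [hQ]
  apply Finset.sum_congr rfl
  intro t ht
  rw [mem_Icc] at ht
  have ht1 : 1 ≤ t := ht.1
  have hVT := VT_card (m := m) ht1 hmn
  have hVTQ : ((VT n m t).card : ℚ) = (n : ℚ) * ((n - m*t - 1).choose (t-1) : ℚ) / (t : ℚ) := by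
    have hq := congrArg (fun z : ℕ => (z : ℚ)) hVT
    push_cast at hq
    have ht0 : (t:ℚ) ≠ 0 := Nat.cast_ne_zero.2 (by omega)
    field_simp
    linear_combination hq
  have hsign : (-1:ℚ)^(t+1) = (-1:ℚ)^(t-1) := by
    rw [show t + 1 = (t-1) + 2 by omega, pow_add]
    norm_num
  rw [hVTQ, hsign]
  split_ifs with h
  · ring
  · simp

end CC


/-- For `n > k ≥ m ≥ 3`, the number of `k`-subsets of the vertices of `C_n`
containing `m` consecutive vertices of the cycle equals
`∑_{t=1}^n (−1)^{t−1} (n/t) C(n−mt−1,t−1) C(n−(m+1)t,k−mt)`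
(terms with `mt > k` vanish, per the convention that binomials with negative entries are 0). -/
theorem consecutive_count (n k m : ℕ) (hm : 3 ≤ m) (hmk : m ≤ k) (hkn : k < n) :
    (Nat.card {S : Finset (Fin n) // S.card = k ∧ ∃ a : Fin n, ∀ j, j < m →
        (⟨((a : ℕ) + j) % n, Nat.mod_lt _ (by omega)⟩ : Fin n) ∈ S} : ℚ) =
      ∑ t ∈ Finset.Icc 1 n, if m * t ≤ k then
        (-1 : ℚ) ^ (t - 1) * (n : ℚ) / (t : ℚ) *
          ((n - m * t - 1).choose (t - 1) : ℚ) *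
          ((n - (m + 1) * t).choose (k - m * t) : ℚ)
      else 0 := by
  exact CC.consecutive_count' n k m hm hmk hkn
end

section
/- Let T(B) be the threshold graph generated by a binary string B with |B| ≥ 2 (a vertex for each symbol; an edge between symbols x and y with x to the left of y iff y = 1), and suppose T(B) is connected. A set S ⊆ V(T(B)) is a zero forcing set if and only if (1) S excludes at most one vertex from each block of B, and (2) between any two 1-vertices not in S there is a 0-vertex of B that is in S. -/
/-- The threshold graph generated by a binary string `B` (of length `n`): the vertices are
the symbols of `B`, and there is an edge between symbols `x` and `y` with `x` to the left
of `y` iff `y = 1`. -/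
def thresholdG (n : ℕ) (B : Fin n → Bool) : SimpleGraph (Fin n) :=
  SimpleGraph.fromRel (fun i j => i < j ∧ B j = true)

namespace SimpleGraph

variable {V : Type*} (G : SimpleGraph V)

def IsFort (F : Set V) : Prop :=
  ∀ u ∉ F, ∀ v ∈ F, G.Adj u v → ∃ w ∈ F, w ≠ v ∧ G.Adj u w

def IsForceStep (S : Set V) (u v : V) : Prop :=
  u ∈ S ∧ v ∉ S ∧ G.Adj u v ∧ ∀ w, G.Adj u w → w ≠ v → w ∈ S

variable {G} {S F : Set V}

theorem IsFort.of_adj_of_adj {i j : V} (hi : i ∈ F) (hj : j ∈ F) (hij : i ≠ j)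
    (h : ∀ u ∉ F, ∀ v ∈ F, G.Adj u v → G.Adj u i ∧ G.Adj u j) : G.IsFort F := by
  intro u hu v hv huv
  obtain ⟨hui, huj⟩ := h u hu v hv huv
  by_cases hvi : v = i
  · exact ⟨j, hj, fun hjv => hij (hjv.trans hvi).symm, huj⟩
  · exact ⟨i, hi, fun hiv => hvi hiv.symm, hui⟩

theorem Forced.notMem_of_isFort (hF : G.IsFort F) (hFS : Disjoint F S) {v : V}
    (h : G.Forced S v) : v ∉ F := by
  induction h with
  | mem hv => exact fun hvF => Set.disjoint_left.1 hFS hvF hv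
  | force huv _ _ hu hw =>
    intro hvF
    obtain ⟨w, hwF, hwv, huw⟩ := hF _ hu _ hvF huv
    exact hw w huw hwv hwF

theorem IsFort.not_isZeroForcingSet (hF : G.IsFort F) (hFS : Disjoint F S) (hne : F.Nonempty) :
    ¬ G.IsZeroForcingSet S := fun h =>
  hne.elim fun v hv => (h v).notMem_of_isFort hF hFS hv

theorem Forced.of_forall_forced {T : Set V} (hT : ∀ t ∈ T, G.Forced S t) {v : V}
    (hv : G.Forced T v) : G.Forced S v := by
  induction hv with
  | mem ht => exact hT _ ht
  | force huv _ _ hu hw => exact .force huv hu hw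

theorem IsForceStep.isZeroForcingSet_of_insert {u v : V} (hstep : G.IsForceStep S u v)
    (h : G.IsZeroForcingSet (insert v S)) : G.IsZeroForcingSet S := by
  obtain ⟨hu, -, huv, hw⟩ := hstep
  have hv : G.Forced S v := .force huv (.mem hu) fun w huw hwv => .mem (hw w huw hwv)
  refine fun x => (h x).of_forall_forced ?_
  rintro t (rfl | ht)
  · exact hv
  · exact .mem ht

theorem isZeroForcingSet_of_exists_isForceStep [Finite V] {P : Set V → Prop}
    (hP : ∀ S v, P S → P (insert v S))
    (hstep : ∀ S, P S → (∃ v, v ∉ S) → ∃ u v, G.IsForceStep S u v) (S : Set V) (hS : P S) :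
    G.IsZeroForcingSet S := by
  induction S using WellFoundedGT.induction with
  | _ S ih =>
  by_cases hfull : ∀ v, v ∈ S
  · exact fun v => .mem (hfull v)
  · obtain ⟨u, v, huv⟩ := hstep S hS (not_forall.1 hfull)
    exact huv.isZeroForcingSet_of_insert (ih _ (Set.ssubset_insert huv.2.1) (hP S v hS))

end SimpleGraph

section Threshold

variable {n : ℕ} {B : Fin n → Bool} {S : Set (Fin n)}

theorem thresholdG_adj {i j : Fin n} :
    (thresholdG n B).Adj i j ↔ i < j ∧ B j = true ∨ j < i ∧ B i = true := by
  simp only [thresholdG, SimpleGraph.fromRel_adj, ne_eq, and_iff_right_iff_imp]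
  rintro (⟨h, -⟩ | ⟨h, -⟩) rfl <;> exact lt_irrefl _ h

theorem thresholdG_forall_adj_iff {u : Fin n} {P : Fin n → Prop} :
    (∀ w, (thresholdG n B).Adj u w → P w) ↔
      (B u = true → ∀ w < u, P w) ∧ ∀ w, u < w → B w = true → P w := by
  simp only [thresholdG_adj]
  grind

theorem thresholdG_adj_iff_adj_of_block {i j u : Fin n} (hij : i ≤ j)
    (hB : ∀ k, i ≤ k → k ≤ j → B k = B i) (hui : u ≠ i) (huj : u ≠ j) :
    (thresholdG n B).Adj u i ↔ (thresholdG n B).Adj u j := by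
  have hBj := hB j hij le_rfl
  simp only [thresholdG_adj]
  rcases lt_or_gt_of_ne hui with hu | hu
  · grind
  rcases lt_or_gt_of_ne huj with hu' | hu'
  · have := hB u hu.le hu'.le
    grind
  · grind

def MissesAtMostOnePerBlock (B : Fin n → Bool) (S : Set (Fin n)) : Prop :=
  ∀ i j : Fin n, i ≤ j → (∀ k, i ≤ k → k ≤ j → B k = B i) → i ∉ S → j ∉ S → i = j

def SeparatesMissingOnes (B : Fin n → Bool) (S : Set (Fin n)) : Prop :=
  ∀ i j : Fin n, i < j → B i = true → B j = true → i ∉ S → j ∉ S →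
    ∃ k, i < k ∧ k < j ∧ B k = false ∧ k ∈ S

theorem MissesAtMostOnePerBlock.mono {T : Set (Fin n)} (h : MissesAtMostOnePerBlock B S)
    (hST : S ⊆ T) : MissesAtMostOnePerBlock B T :=
  fun i j hij hB hi hj => h i j hij hB (fun h => hi (hST h)) (fun h => hj (hST h))

theorem SeparatesMissingOnes.mono {T : Set (Fin n)} (h : SeparatesMissingOnes B S)
    (hST : S ⊆ T) : SeparatesMissingOnes B T := fun i j hij hBi hBj hi hj =>
  (h i j hij hBi hBj (fun h => hi (hST h)) (fun h => hj (hST h))).imp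
    fun _ hk => ⟨hk.1, hk.2.1, hk.2.2.1, hST hk.2.2.2⟩

theorem missesAtMostOnePerBlock_of_isZeroForcingSet
    (h : (thresholdG n B).IsZeroForcingSet S) : MissesAtMostOnePerBlock B S := by
  intro i j hij hB hi hj
  by_contra hne
  refine (SimpleGraph.IsFort.of_adj_of_adj (F := {i, j}) (by simp) (by simp) hne ?_)
    |>.not_isZeroForcingSet ?_ ⟨i, by simp⟩ h
  · intro u hu v hv huv
    simp only [Set.mem_insert_iff, Set.mem_singleton_iff, not_or] at hu
    have twin := thresholdG_adj_iff_adj_of_block hij hB hu.1 hu.2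
    rcases hv with rfl | rfl
    · exact ⟨huv, twin.1 huv⟩
    · exact ⟨twin.2 huv, huv⟩
  · simp [Set.disjoint_insert_left, hi, hj]

theorem separatesMissingOnes_of_isZeroForcingSet
    (h : (thresholdG n B).IsZeroForcingSet S) : SeparatesMissingOnes B S := by
  intro i j hij hBi hBj hi hj
  by_contra! hno
  let F : Set (Fin n) := {v | v = i ∨ v = j ∨ i < v ∧ v < j ∧ B v = false}
  refine (SimpleGraph.IsFort.of_adj_of_adj (F := F) (.inl rfl) (.inr (.inl rfl)) hij.ne ?_)
    |>.not_isZeroForcingSet ?_ ⟨i, .inl rfl⟩ h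
  · intro u hu v hv huv
    simp only [F, Set.mem_ofPred_eq, thresholdG_adj] at hu hv huv ⊢
    grind
  · rw [Set.disjoint_left]
    rintro v (rfl | rfl | ⟨hiv, hvj, hBv⟩)
    exacts [hi, hj, hno v hiv hvj hBv]

theorem exists_isForceStep_of_ones_mem (hn : 0 < n) (hlast : B ⟨n - 1, by omega⟩ = true)
    (h1 : MissesAtMostOnePerBlock B S) (hones : ∀ w, B w = true → w ∈ S) (hne : ∃ v, v ∉ S) :
    ∃ u v, (thresholdG n B).IsForceStep S u v := by
  obtain ⟨m, hm, hmin⟩ := Set.exists_min_image {v | v ∉ S} id (Set.toFinite _) hne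
  have hBm : B m = false := by
    by_contra h
    exact hm (hones m (by simpa using h))
  have hm_last : m < ⟨n - 1, by omega⟩ := by
    have hne : m ≠ ⟨n - 1, by omega⟩ := fun h => by simp [h, hlast] at hBm
    rw [ne_eq, Fin.ext_iff] at hne
    rw [Fin.lt_def]
    have := m.isLt
    simp only at hne ⊢
    omega
  obtain ⟨u, ⟨hmu, hBu⟩, hufirst⟩ := Set.exists_min_image {w | m < w ∧ B w = true} id
    (Set.toFinite _) ⟨_, hm_last, hlast⟩
  refine ⟨u, m, hones u hBu, hm, thresholdG_adj.2 (.inr ⟨hmu, hBu⟩),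
    thresholdG_forall_adj_iff.2 ⟨fun _ w hwu hwm => ?_, fun w _ hBw _ => hones w hBw⟩⟩
  by_contra hw
  have hmw : m < w := lt_of_le_of_ne (hmin w hw) (Ne.symm hwm)
  refine hwm (h1 m w hmw.le (fun k hmk hkw => ?_) hm hw).symm
  rw [hBm, Bool.eq_false_iff]
  intro hBk
  rcases hmk.lt_or_eq with hmk | rfl
  · exact absurd (hufirst k ⟨hmk, hBk⟩) (not_le.2 (hkw.trans_lt hwu))
  · simp [hBk] at hBm

theorem isForceStep_of_max_colored_zero (h2 : SeparatesMissingOnes B S) {k v : Fin n}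
    (hkS : k ∈ S) (hBk : B k = false) (hkv : k < v)
    (hkmax : ∀ k' ∈ {k' | k' < v ∧ B k' = false ∧ k' ∈ S}, k' ≤ k)
    (hvS : v ∉ S) (hBv : B v = true) (hvmax : ∀ w, v < w → B w = true → w ∈ S) :
    (thresholdG n B).IsForceStep S k v := by
  refine ⟨hkS, hvS, thresholdG_adj.2 (.inl ⟨hkv, hBv⟩), thresholdG_forall_adj_iff.2
    ⟨fun h => absurd (hBk.symm.trans h) Bool.false_ne_true, fun w hkw hBw hwv => ?_⟩⟩
  by_contra hwS
  rcases lt_or_gt_of_ne hwv with hwv | hvw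
  · obtain ⟨k', hwk', hk'v, hBk', hk'S⟩ := h2 w v hwv hBw hBv hwS hvS
    exact absurd (hkmax k' ⟨hk'v, hBk', hk'S⟩) (not_le.2 (hkw.trans hwk'))
  · exact hwS (hvmax w hvw hBw)

theorem exists_isForceStep_of_unique_missing_one (hn : 1 < n)
    (hB01 : B ⟨0, by omega⟩ = B ⟨1, hn⟩) (h1 : MissesAtMostOnePerBlock B S) {v : Fin n}
    (hvS : v ∉ S) (hBv : B v = true) (huniq : ∀ w, B w = true → w ∉ S → w = v)
    (hzero : ∀ k < v, B k = false → k ∉ S) : ∃ u v, (thresholdG n B).IsForceStep S u v := by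
  set z : Fin n := ⟨0, by omega⟩
  set o : Fin n := ⟨1, hn⟩
  have hzo : z < o := Fin.lt_def.2 Nat.zero_lt_one
  have hz_le : ∀ w, z ≤ w := fun w => Fin.le_def.2 (Nat.zero_le _)
  have hlt_o : ∀ w, w < o → w = z := fun w hw => Fin.ext <| by
    rw [Fin.lt_def] at hw
    simp only [z, o] at hw ⊢
    omega
  have hforall_ones : ∀ u w, u < w → B w = true → w ≠ v → w ∈ S :=
    fun _ w _ hBw hwv => by_contra fun hw => hwv (huniq w hBw hw)
  by_cases hz : z ∈ S
  · have hzv : z < v := lt_of_le_of_ne (hz_le v) (fun h => hvS (h ▸ hz))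
    have hBz : B z = true := by
      by_contra h
      exact hzero z hzv (by simpa using h) hz
    exact ⟨z, v, hz, hvS, thresholdG_adj.2 (.inl ⟨hzv, hBv⟩), thresholdG_forall_adj_iff.2
      ⟨fun _ w hw => absurd hw (not_lt.2 (hz_le w)), hforall_ones z⟩⟩
  cases hBz : B z
  -- vertices 0 and 1 form a 0-block, so vertex 1 is a colored 0-vertex before `v`
  · have hBo : B o = false := hB01 ▸ hBz
    have ho : o ∈ S := by
      by_contra ho
      refine hzo.ne (h1 z o hzo.le (fun k _ hko => ?_) hz ho)
      rcases hko.lt_or_eq with hko | rfl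
      · rw [hlt_o k hko]
      · exact hBo.trans hBz.symm
    have hov : o < v := by
      refine lt_of_le_of_ne (not_lt.1 fun hvo => ?_) fun h => ?_
      · simp [hlt_o v hvo, hBz] at hBv
      · simp [← h, hBo] at hBv
    exact absurd ho (hzero o hov hBo)
  · have hvz : v = z := (huniq z hBz hz).symm
    have hBo : B o = true := hB01 ▸ hBz
    have ho : o ∈ S := by_contra fun ho => hzo.ne' ((huniq o hBo ho).trans hvz)
    exact ⟨o, v, ho, hvS, thresholdG_adj.2 (.inr ⟨hvz ▸ hzo, hBo⟩), thresholdG_forall_adj_iff.2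
      ⟨fun _ w hw hwv => absurd ((hlt_o w hw).trans hvz.symm) hwv, hforall_ones o⟩⟩

theorem exists_isForceStep_of_max_missing_one (hn : 1 < n)
    (hB01 : B ⟨0, by omega⟩ = B ⟨1, hn⟩) (h1 : MissesAtMostOnePerBlock B S)
    (h2 : SeparatesMissingOnes B S) {v : Fin n} (hvS : v ∉ S) (hBv : B v = true)
    (hvmax : ∀ w, v < w → B w = true → w ∈ S) : ∃ u v, (thresholdG n B).IsForceStep S u v := by
  by_cases hk : ∃ k, k < v ∧ B k = false ∧ k ∈ S
  · obtain ⟨k, ⟨hkv, hBk, hkS⟩, hkmax⟩ :=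
      Set.exists_max_image {k | k < v ∧ B k = false ∧ k ∈ S} id (Set.toFinite _) hk
    exact ⟨k, v, isForceStep_of_max_colored_zero h2 hkS hBk hkv hkmax hvS hBv hvmax⟩
  have hzero : ∀ k < v, B k = false → k ∉ S := fun k hkv hBk hkS => hk ⟨k, hkv, hBk, hkS⟩
  refine exists_isForceStep_of_unique_missing_one hn hB01 h1 hvS hBv (fun w hBw hwS => ?_) hzero
  by_contra hwv
  rcases lt_or_gt_of_ne hwv with hwv | hvw
  · obtain ⟨k, -, hkv, hBk, hkS⟩ := h2 w v hwv hBw hBv hwS hvS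
    exact hzero k hkv hBk hkS
  · exact hwS (hvmax w hvw hBw)

theorem exists_isForceStep (hn : 1 < n) (hB01 : B ⟨0, by omega⟩ = B ⟨1, hn⟩)
    (hlast : B ⟨n - 1, by omega⟩ = true) (h1 : MissesAtMostOnePerBlock B S)
    (h2 : SeparatesMissingOnes B S) (hne : ∃ v, v ∉ S) :
    ∃ u v, (thresholdG n B).IsForceStep S u v := by
  by_cases hones : ∀ w, B w = true → w ∈ S
  · exact exists_isForceStep_of_ones_mem (by omega) hlast h1 hones hne
  obtain ⟨v, ⟨hBv, hvS⟩, hvmax⟩ := Set.exists_max_image {w | B w = true ∧ w ∉ S} id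
    (Set.toFinite _) (by simpa [Set.Nonempty] using hones)
  exact exists_isForceStep_of_max_missing_one hn hB01 h1 h2 hvS hBv fun w hvw hBw =>
    by_contra fun hwS => absurd (hvmax w ⟨hBw, hwS⟩) (not_le.2 hvw)

theorem isZeroForcingSet_of_missesAtMostOnePerBlock_of_separatesMissingOnes (hn : 1 < n)
    (hB01 : B ⟨0, by omega⟩ = B ⟨1, hn⟩) (hlast : B ⟨n - 1, by omega⟩ = true)
    (h1 : MissesAtMostOnePerBlock B S) (h2 : SeparatesMissingOnes B S) :
    (thresholdG n B).IsZeroForcingSet S :=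
  SimpleGraph.isZeroForcingSet_of_exists_isForceStep
    (P := fun S => MissesAtMostOnePerBlock B S ∧ SeparatesMissingOnes B S)
    (fun _ _ hS => ⟨hS.1.mono (Set.subset_insert _ _), hS.2.mono (Set.subset_insert _ _)⟩)
    (fun _ hS hne => exists_isForceStep hn hB01 hlast hS.1 hS.2 hne) S ⟨h1, h2⟩

end Threshold

/-- In a connected threshold graph `T(B)` (with first two symbols of `B`
equal and last block a 1-block), `S` is a zero forcing set iff (1) `S` excludes at most one
vertex from each block of `B`, and (2) between any two 1-vertices not in `S` there is a
0-vertex in `S`. -/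
theorem threshold_zfs_iff (n : ℕ) (hn : 2 ≤ n) (B : Fin n → Bool)
    (hB01 : B ⟨0, by omega⟩ = B ⟨1, by omega⟩)
    (hlast : B ⟨n - 1, by omega⟩ = true)
    (S : Set (Fin n)) :
    (thresholdG n B).IsZeroForcingSet S ↔
      ((∀ i j : Fin n, i ≤ j → (∀ k, i ≤ k → k ≤ j → B k = B i) →
          i ∉ S → j ∉ S → i = j) ∧
       (∀ i j : Fin n, i < j → B i = true → B j = true → i ∉ S → j ∉ S →
          ∃ k, i < k ∧ k < j ∧ B k = false ∧ k ∈ S)) :=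
  ⟨fun h => ⟨missesAtMostOnePerBlock_of_isZeroForcingSet h,
      separatesMissingOnes_of_isZeroForcingSet h⟩,
    fun ⟨h1, h2⟩ =>
      isZeroForcingSet_of_missesAtMostOnePerBlock_of_separatesMissingOnes hn hB01 hlast h1 h2⟩
end

section
/- In a threshold graph T(B): if at least one 1-vertex is uncolored then no 1-vertex can force a 0-vertex; and if more than one 1-vertex is uncolored then no 1-vertex can force any of its neighbors. -/
theorem thresholdG_adj_of_eq_true {n : ℕ} {B : Fin n → Bool} {u x : Fin n} (hu : B u = true)
    (hx : B x = true) (hne : u ≠ x) : (thresholdG n B).Adj u x := by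
  refine ⟨hne, ?_⟩
  rcases hne.lt_or_gt with h | h
  · exact Or.inl ⟨h, hx⟩
  · exact Or.inr ⟨h, hu⟩

theorem thresholdG_eq_of_forces {n : ℕ} {B : Fin n → Bool} {C : Set (Fin n)} {u v x : Fin n}
    (hu : B u = true) (huC : u ∈ C) (hall : ∀ w, (thresholdG n B).Adj u w → w ≠ v → w ∈ C)
    (hx : B x = true) (hxC : x ∉ C) : x = v := by
  by_contra hxv
  have hux : u ≠ x := by rintro rfl; exact hxC huC
  exact hxC (hall x (thresholdG_adj_of_eq_true hu hx hux) hxv)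

/-- In a threshold graph, with colored set `C`: if some 1-vertex is uncolored
then no 1-vertex can force a 0-vertex; if more than one 1-vertex is uncolored then no
1-vertex can force any neighbor.  ("u can force v" means u is colored and v is its unique
uncolored neighbor.) -/
theorem threshold_one_vertices_cannot_force (n : ℕ) (B : Fin n → Bool) (C : Set (Fin n)) :
    ((∃ x, B x = true ∧ x ∉ C) → ∀ u v : Fin n, B u = true → B v = false →
      ¬(u ∈ C ∧ (thresholdG n B).Adj u v ∧ v ∉ C ∧
        ∀ w, (thresholdG n B).Adj u w → w ≠ v → w ∈ C)) ∧
    ((∃ x y : Fin n, x ≠ y ∧ B x = true ∧ B y = true ∧ x ∉ C ∧ y ∉ C) →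
      ∀ u v : Fin n, B u = true →
      ¬(u ∈ C ∧ (thresholdG n B).Adj u v ∧ v ∉ C ∧
        ∀ w, (thresholdG n B).Adj u w → w ≠ v → w ∈ C)) := by
  constructor
  · rintro ⟨x, hx, hxC⟩ u v hu hv ⟨huC, -, -, hall⟩
    obtain rfl := thresholdG_eq_of_forces hu huC hall hx hxC
    simp [hx] at hv
  · rintro ⟨x, y, hxy, hx, hy, hxC, hyC⟩ u v hu ⟨huC, -, -, hall⟩
    exact hxy ((thresholdG_eq_of_forces hu huC hall hx hxC).trans
      (thresholdG_eq_of_forces hu huC hall hy hyC).symm)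
end

section
/- For any graph G on n vertices and any integer i with 1 ≤ i < n/2, the number of zero forcing sets of size i is at most the number of zero forcing sets of size i+1: z(G;i) ≤ z(G;i+1). -/
lemma SimpleGraph.Forced.mono {V : Type*} {G : SimpleGraph V} {S T : Set V} (h : S ⊆ T)
    {v : V} (hv : G.Forced S v) : G.Forced T v := by
  induction hv with
  | mem h' => exact .mem (h h')
  | force hadj _ _ ihu ihw => exact .force hadj ihu ihw

lemma SimpleGraph.IsZeroForcingSet.mono {V : Type*} {G : SimpleGraph V} {S T : Set V}
    (h : S ⊆ T) (hS : G.IsZeroForcingSet S) : G.IsZeroForcingSet T :=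
  fun v => (hS v).mono h

/-- For `1 ≤ i < n/2`, `z(G;i) ≤ z(G;i+1)`. -/
theorem zcount_monotone {V : Type*} [Fintype V] (G : SimpleGraph V) (i : ℕ)
    (h1 : 1 ≤ i) (h2 : 2 * i < Fintype.card V) :
    G.zcount i ≤ G.zcount (i + 1) := by
  classical
  set n := Fintype.card V
  have key : ∀ j, G.zcount j =
      (Finset.univ.filter (fun S : Finset V => S.card = j ∧ G.IsZeroForcingSet ↑S)).card := by
    intro j
    rw [SimpleGraph.zcount, Nat.card_eq_fintype_card, Fintype.card_subtype]
  rw [key, key]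
  set s := Finset.univ.filter (fun S : Finset V => S.card = i ∧ G.IsZeroForcingSet ↑S) with hs
  set t := Finset.univ.filter (fun S : Finset V => S.card = i + 1 ∧ G.IsZeroForcingSet ↑S) with ht
  have hmain : s.card * (n - i) ≤ t.card * (i + 1) := by
    apply Finset.card_mul_le_card_mul (fun A B => A ⊆ B)
    · intro A hA
      simp only [hs, Finset.mem_filter] at hA
      obtain ⟨-, hAcard, hAzf⟩ := hA
      have : (Aᶜ : Finset V).card ≤ (t.bipartiteAbove (fun A B => A ⊆ B) A).card := by
        apply Finset.card_le_card_of_injOn (fun x => insert x A)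
        · intro x hx
          rw [Finset.mem_coe, Finset.mem_compl] at hx
          simp only [Finset.mem_coe, Finset.bipartiteAbove, ht, Finset.mem_filter, Finset.mem_univ, true_and]
          refine ⟨⟨by rw [Finset.card_insert_of_notMem hx, hAcard], ?_⟩, Finset.subset_insert _ _⟩
          apply hAzf.mono
          intro v hv
          simp only [Finset.coe_insert, Set.mem_insert_iff]
          exact Or.inr hv
        · intro x hx y hy hxy
          rw [Finset.mem_coe, Finset.mem_compl] at hx hy
          have hxy' : insert x A = insert y A := hxy
          have : x ∈ insert y A := hxy' ▸ Finset.mem_insert_self x A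
          rcases Finset.mem_insert.mp this with h | h
          · exact h
          · exact absurd h hx
      calc n - i = (Aᶜ : Finset V).card := by
              rw [Finset.card_compl, hAcard]
        _ ≤ _ := this
    · intro B hB
      simp only [ht, Finset.mem_filter] at hB
      obtain ⟨-, hBcard, -⟩ := hB
      have hsub : s.bipartiteBelow (fun A B => A ⊆ B) B ⊆ B.powersetCard i := by
        intro A hA
        simp only [Finset.bipartiteBelow, hs, Finset.mem_filter] at hA
        exact Finset.mem_powersetCard.mpr ⟨hA.2, hA.1.2.1⟩
      calc (s.bipartiteBelow (fun A B => A ⊆ B) B).card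
          ≤ (B.powersetCard i).card := Finset.card_le_card hsub
        _ = (i + 1).choose i := by rw [Finset.card_powersetCard, hBcard]
        _ = i + 1 := Nat.choose_succ_self_right i
  have hle : i + 1 ≤ n - i := by omega
  have : s.card * (i + 1) ≤ t.card * (i + 1) :=
    le_trans (Nat.mul_le_mul_left _ hle) hmain
  exact Nat.le_of_mul_le_mul_right this (Nat.succ_pos i)
end

section
/- If a graph G on n vertices contains a Hamiltonian path, then for every 1 ≤ i ≤ n, z(G;i) ≤ C(n,i) − C(n−i−1, i), with equality for G = P_n. -/
section Aux
open Finset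


def Sparse (T : Finset ℕ) : Prop := ∀ a ∈ T, a + 1 ∉ T

instance : DecidablePred Sparse := fun T => by unfold Sparse; infer_instance

lemma sparse_subset {T T' : Finset ℕ} (h : Sparse T) (hs : T' ⊆ T) : Sparse T' :=
  fun a ha hb => h a (hs ha) (hs hb)

noncomputable def scount (m i : ℕ) : ℕ :=
  ((Finset.range m).powersetCard i |>.filter Sparse).card

lemma scount_eq (m i : ℕ) : scount m i = (m + 1 - i).choose i := by
  induction m using Nat.strong_induction_on generalizing i with
  | _ m ih =>
  match m, i with
  | 0, 0 => simp only [scount, range_zero, powersetCard_zero, filter_singleton]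
            simp [Sparse]
  | 0, (i+1) =>
      rw [show (0 + 1 - (i+1) = 0) by omega, Nat.choose_eq_zero_of_lt (by omega)]
      simp only [scount, range_zero]
      rw [Finset.powersetCard_eq_empty.mpr (by simp)]
      simp
  | 1, 0 => simp only [scount, powersetCard_zero, filter_singleton]; simp [Sparse]
  | 1, 1 =>
      simp only [scount]
      rw [show ((1:ℕ) + 1 - 1 = 1) by rfl, Nat.choose_self]
      rw [show filter Sparse (Finset.powersetCard 1 (range 1)) = {{0}} by decide]
      simp
  | 1, (i+2) =>
      rw [Nat.choose_eq_zero_of_lt (by omega)]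
      simp only [scount]
      rw [Finset.powersetCard_eq_empty.mpr (by simp)]
      simp
  | (m+2), i =>
      match i with
      | 0 => simp only [scount, powersetCard_zero, filter_singleton]; simp [Sparse]
      | (j+1) =>
        have key : scount (m+2) (j+1) = scount (m+1) (j+1) + scount m j := by
          simp only [scount]
          rw [← Finset.card_filter_add_card_filter_not
            (p := fun T => m+1 ∉ T) (s := filter Sparse (powersetCard (j+1) (range (m+2))))]
          congr 1
          · congr 1
            ext T
            simp only [mem_filter, mem_powersetCard, subset_iff, mem_range]
            constructor
            · rintro ⟨⟨⟨hsub, hcard⟩, hsp⟩, hnot⟩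
              refine ⟨⟨fun {x} hx => ?_, hcard⟩, hsp⟩
              have := hsub hx
              have : x ≠ m+1 := fun h => hnot (h ▸ hx)
              omega
            · rintro ⟨⟨hsub, hcard⟩, hsp⟩
              refine ⟨⟨⟨fun {x} hx => by have := hsub hx; omega, hcard⟩, hsp⟩, fun h => ?_⟩
              have := hsub h; omega
          · apply Finset.card_nbij' (i := fun T => T.erase (m+1))
              (j := fun T => insert (m+1) T)
            · intro T hT
              simp only [mem_coe, mem_filter, mem_powersetCard, not_not] at hT ⊢
              obtain ⟨⟨⟨hsub, hcard⟩, hsp⟩, hmem⟩ := hT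
              refine ⟨⟨fun x hx => ?_, ?_⟩, sparse_subset hsp (erase_subset _ _)⟩
              · rw [mem_erase] at hx
                have h1 := hsub hx.2
                rw [mem_range] at h1 ⊢
                have : x ≠ m := by
                  rintro rfl
                  exact hsp x hx.2 hmem
                omega
              · rw [card_erase_of_mem hmem, hcard]
                omega
            · intro T hT
              simp only [mem_coe, mem_filter, mem_powersetCard, not_not] at hT ⊢
              obtain ⟨⟨hsub, hcard⟩, hsp⟩ := hT
              have hni : m + 1 ∉ T := fun h => absurd (hsub h) (by simp)
              refine ⟨⟨⟨?_, ?_⟩, ?_⟩, mem_insert_self _ _⟩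
              · intro x hx
                rw [mem_insert] at hx
                rcases hx with rfl | hx
                · simp
                · have := hsub hx; rw [mem_range] at this ⊢; omega
              · rw [card_insert_of_notMem hni, hcard]
              · intro a ha hb
                rw [mem_insert] at ha hb
                rcases ha with rfl | ha
                · rcases hb with h | hb
                  · omega
                  · have := hsub hb; simp at this; omega
                · rcases hb with h | hb
                  · have := hsub ha; simp at this; omega
                  · exact hsp a ha hb
            · intro T hT
              simp only [mem_coe, mem_filter, not_not] at hT
              exact insert_erase hT.2
            · intro T hT
              simp only [mem_coe, mem_filter, mem_powersetCard] at hT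
              have hni : m + 1 ∉ T := fun h => absurd (hT.1.1 h) (by simp)
              exact erase_insert hni
        rw [key, ih (m+1) (by omega), ih m (by omega)]
        rcases Nat.lt_or_ge (j+1) (m+2) with h | h
        · rw [show m + 2 + 1 - (j+1) = (m + 2 - (j+1)) + 1 by omega,
              show m + 1 + 1 - (j+1) = m + 2 - (j+1) by omega,
              show m + 1 - j = m + 2 - (j + 1) by omega]
          rw [Nat.choose_succ_succ, Nat.add_comm]
        · rw [Nat.choose_eq_zero_of_lt (by omega), Nat.choose_eq_zero_of_lt (by omega),
              Nat.choose_eq_zero_of_lt (by omega)]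

def Bad (n : ℕ) (T : Finset (Fin n)) : Prop :=
  (∀ a ∈ T, 0 < (a : ℕ) ∧ (a : ℕ) + 1 < n) ∧
  (∀ a ∈ T, ∀ b ∈ T, (a : ℕ) + 1 ≠ (b : ℕ))

lemma bad_not_zfs {V : Type*} [DecidableEq V] (G : SimpleGraph V) {n : ℕ} (f : Fin n ≃ V)
    (hf : ∀ i : Fin n, ∀ h : (i : ℕ) + 1 < n, G.Adj (f i) (f ⟨(i : ℕ) + 1, h⟩))
    (T : Finset (Fin n)) (hb : Bad n T) (hne : T.Nonempty) :
    ¬ G.IsZeroForcingSet ↑(T.image ⇑f) := by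
  have key : ∀ v, G.Forced ↑(T.image ⇑f) v → v ∈ T.image ⇑f := by
    intro v hv
    induction hv with
    | mem h => exact Finset.mem_coe.mp h
    | force hadj hu hall ihu ihall =>
      rename_i u v
      exfalso
      obtain ⟨c, hc, rfl⟩ := Finset.mem_image.mp ihu
      obtain ⟨hc0, hcn⟩ := hb.1 c hc
      -- the two path-neighbors of c
      have h1 : ((c : ℕ) - 1) + 1 < n := by omega
      set w₁ : V := f ⟨(c : ℕ) - 1, by omega⟩ with hw₁
      set w₂ : V := f ⟨(c : ℕ) + 1, hcn⟩ with hw₂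
      have hadj1 : G.Adj (f c) w₁ := by
        have := hf ⟨(c : ℕ) - 1, by omega⟩ h1
        have hcc : (⟨((c : ℕ) - 1) + 1, h1⟩ : Fin n) = c := by
          apply Fin.ext; simp; omega
        rw [hcc] at this
        exact this.symm
      have hadj2 : G.Adj (f c) w₂ := hf c hcn
      have hne12 : w₁ ≠ w₂ := by
        intro h
        have := f.injective h
        rw [Fin.ext_iff] at this
        simp at this
      have hnm1 : w₁ ∉ T.image ⇑f := by
        intro h
        obtain ⟨d, hd, hde⟩ := Finset.mem_image.mp h
        have hd2 := f.injective hde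
        have : (d : ℕ) = (c : ℕ) - 1 := by rw [hd2]
        exact hb.2 d hd c hc (by omega)
      have hnm2 : w₂ ∉ T.image ⇑f := by
        intro h
        obtain ⟨d, hd, hde⟩ := Finset.mem_image.mp h
        have hd2 := f.injective hde
        have : (d : ℕ) = (c : ℕ) + 1 := by rw [hd2]
        exact hb.2 c hc d hd (by omega)
      rcases eq_or_ne w₁ v with rfl | h1'
      · exact hnm2 (ihall w₂ hadj2 (Ne.symm hne12))
      · exact hnm1 (ihall w₁ hadj1 h1')
  intro hzfs
  obtain ⟨a, ha⟩ := hne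
  obtain ⟨ha0, han⟩ := hb.1 a ha
  have hv := key (f ⟨(a : ℕ) + 1, han⟩) (hzfs _)
  obtain ⟨d, hd, hde⟩ := Finset.mem_image.mp hv
  have := f.injective hde
  refine hb.2 a ha d hd ?_
  rw [this]

lemma pathG_adj {n : ℕ} {a b : Fin n} :
    (pathG n).Adj a b ↔ ((a : ℕ) + 1 = (b : ℕ) ∨ (b : ℕ) + 1 = (a : ℕ)) := by
  rw [pathG, SimpleGraph.fromRel_adj]
  constructor
  · tauto
  · intro h
    refine ⟨?_, h⟩
    rintro rfl
    omega

lemma spread_up {n : ℕ} (S : Set (Fin n)) {a : ℕ} (ha1 : a + 1 < n)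
    (h0 : (pathG n).Forced S ⟨a, by omega⟩) (h1 : (pathG n).Forced S ⟨a + 1, ha1⟩) :
    ∀ m (hm : m < n), a ≤ m → (pathG n).Forced S ⟨m, hm⟩ := by
  intro m
  induction m using Nat.strong_induction_on with
  | _ m ih =>
  intro hm ham
  rcases Nat.lt_or_ge m (a + 2) with h | h
  · rcases Nat.eq_or_lt_of_le ham with rfl | h'
    · exact h0
    · have : m = a + 1 := by omega
      subst this; exact h1
  · refine SimpleGraph.Forced.force (u := ⟨m - 1, by omega⟩) ?_ ?_ ?_
    · rw [pathG_adj]; left; simp; omega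
    · exact ih (m - 1) (by omega) (by omega) (by omega)
    · intro w hw hwv
      rw [pathG_adj] at hw
      simp only at hw
      have hwval : (w : ℕ) = m - 2 := by
        rcases hw with h' | h'
        · exfalso; apply hwv; apply Fin.ext; simp; omega
        · omega
      have : w = ⟨m - 2, by omega⟩ := by apply Fin.ext; simp [hwval]
      rw [this]
      exact ih (m - 2) (by omega) (by omega) (by omega)

lemma spread_down {n : ℕ} (S : Set (Fin n)) {a : ℕ} (ha1 : a + 1 < n)
    (h0 : (pathG n).Forced S ⟨a, by omega⟩) (h1 : (pathG n).Forced S ⟨a + 1, ha1⟩) :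
    ∀ d (hd : d ≤ a), (pathG n).Forced S ⟨a - d, by omega⟩ := by
  intro d
  induction d using Nat.strong_induction_on with
  | _ d ih =>
  intro hd
  match d with
  | 0 => exact h0
  | (d+1) =>
    refine SimpleGraph.Forced.force (u := ⟨a - d, by omega⟩) ?_ ?_ ?_
    · rw [pathG_adj]; right; simp; omega
    · exact ih d (by omega) (by omega)
    · intro w hw hwv
      rw [pathG_adj] at hw
      simp only at hw
      have hwval : (w : ℕ) = a - d + 1 := by
        rcases hw with h' | h'
        · omega
        · exfalso; apply hwv; apply Fin.ext; simp; omega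
      match d with
      | 0 =>
        have : w = ⟨a + 1, ha1⟩ := by apply Fin.ext; simp; omega
        rw [this]; exact h1
      | (d+1) =>
        have : w = ⟨a - d, by omega⟩ := by apply Fin.ext; simp; omega
        rw [this]
        exact ih d (by omega) (by omega)

lemma pair_zfs {n : ℕ} (S : Set (Fin n)) {a : ℕ} (ha1 : a + 1 < n)
    (h0 : (pathG n).Forced S ⟨a, by omega⟩) (h1 : (pathG n).Forced S ⟨a + 1, ha1⟩) :
    (pathG n).IsZeroForcingSet S := by
  intro v
  rcases Nat.lt_or_ge (v : ℕ) a with h | h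
  · have := spread_down S ha1 h0 h1 (a - v) (by omega)
    have hv : v = ⟨a - (a - (v : ℕ)), by omega⟩ := by apply Fin.ext; simp; omega
    rw [hv]; exact this
  · have := spread_up S ha1 h0 h1 (v : ℕ) v.isLt h
    have hv : v = ⟨(v : ℕ), v.isLt⟩ := by apply Fin.ext; simp
    rw [hv]; exact this

lemma not_bad_zfs {n : ℕ} (S : Finset (Fin n)) (hne : S.Nonempty) (hnb : ¬ Bad n S) :
    (pathG n).IsZeroForcingSet ↑S := by
  have hn : 0 < n := by
    obtain ⟨a, _⟩ := hne
    exact a.pos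
  rcases Nat.lt_or_ge n 2 with hn2 | hn2
  · -- n = 1
    intro v
    obtain ⟨a, ha⟩ := hne
    have : v = a := by apply Fin.ext; omega
    rw [this]
    exact SimpleGraph.Forced.mem (Finset.mem_coe.mpr ha)
  rw [Bad, not_and_or] at hnb
  rcases hnb with h | h
  · push_neg at h
    obtain ⟨a, ha, hcon⟩ := h
    rcases Nat.eq_zero_or_pos (a : ℕ) with h0 | h0
    · -- a = 0
      have hf0 : (pathG n).Forced ↑S ⟨0, hn⟩ := by
        have : a = ⟨0, hn⟩ := Fin.ext h0
        exact SimpleGraph.Forced.mem (Finset.mem_coe.mpr (this ▸ ha))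
      have hf1 : (pathG n).Forced ↑S ⟨1, hn2⟩ := by
        refine SimpleGraph.Forced.force (u := ⟨0, hn⟩) ?_ hf0 ?_
        · rw [pathG_adj]; left; simp
        · intro w hw hwv
          rw [pathG_adj] at hw
          exfalso
          apply hwv
          apply Fin.ext
          simp only at hw ⊢
          omega
      exact pair_zfs ↑S hn2 hf0 hf1
    · -- a = n - 1
      have han : (a : ℕ) = n - 1 := by have := a.isLt; have := hcon h0; omega
      have h2 : n - 2 + 1 < n := by omega
      have hftop : (pathG n).Forced ↑S ⟨n - 2 + 1, h2⟩ := by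
        have : a = ⟨n - 2 + 1, h2⟩ := by apply Fin.ext; simp; omega
        exact SimpleGraph.Forced.mem (Finset.mem_coe.mpr (this ▸ ha))
      have hfsub : (pathG n).Forced ↑S ⟨n - 2, by omega⟩ := by
        refine SimpleGraph.Forced.force (u := ⟨n - 2 + 1, h2⟩) ?_ hftop ?_
        · rw [pathG_adj]; right; simp
        · intro w hw hwv
          rw [pathG_adj] at hw
          exfalso
          apply hwv
          apply Fin.ext
          have := w.isLt
          simp only at hw ⊢
          omega
      exact pair_zfs ↑S h2 hfsub hftop
  · push_neg at h
    obtain ⟨a, ha, b, hb, hab⟩ := h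
    have hb1 : (a : ℕ) + 1 < n := by rw [hab]; exact b.isLt
    have hf0 : (pathG n).Forced ↑S ⟨(a : ℕ), a.isLt⟩ := by
      have : a = ⟨(a : ℕ), a.isLt⟩ := by apply Fin.ext; simp
      exact SimpleGraph.Forced.mem (Finset.mem_coe.mpr (this ▸ ha))
    have hf1 : (pathG n).Forced ↑S ⟨(a : ℕ) + 1, hb1⟩ := by
      have : b = ⟨(a : ℕ) + 1, hb1⟩ := by apply Fin.ext; simp [← hab]
      exact SimpleGraph.Forced.mem (Finset.mem_coe.mpr (this ▸ hb))
    exact pair_zfs ↑S hb1 hf0 hf1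

instance {n : ℕ} : DecidablePred (Bad n) := fun T => by unfold Bad; infer_instance

lemma bad_card (n i : ℕ) (hi : 1 ≤ i) :
    ((Finset.univ : Finset (Finset (Fin n))).filter (fun T => T.card = i ∧ Bad n T)).card
      = (n - i - 1).choose i := by
  rcases Nat.lt_or_ge n 2 with hn | hn
  · rw [show n - i - 1 = 0 by omega, Nat.choose_eq_zero_of_lt (by omega)]
    rw [card_eq_zero, filter_eq_empty_iff]
    rintro T - ⟨hcard, hbad⟩
    have hne : T.Nonempty := card_pos.mp (by omega)
    obtain ⟨a, ha⟩ := hne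
    have := hbad.1 a ha
    omega
  · have hn0 : 0 < n := by omega
    rw [show n - i - 1 = n - 2 + 1 - i by omega, ← scount_eq]
    unfold scount
    apply Finset.card_nbij' (i := fun T => T.image (fun a : Fin n => (a : ℕ) - 1))
      (j := fun U => U.image (fun u => (⟨(u + 1) % n, Nat.mod_lt _ hn0⟩ : Fin n)))
    · rintro T hT
      rw [mem_coe, mem_filter] at hT
      obtain ⟨-, hcard, hbad⟩ := hT
      rw [mem_coe, mem_filter, mem_powersetCard]
      refine ⟨⟨?_, ?_⟩, ?_⟩
      · intro x hx
        obtain ⟨a, ha, rfl⟩ := mem_image.mp hx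
        have := hbad.1 a ha
        rw [mem_range]; omega
      · rw [Finset.card_image_of_injOn, hcard]
        intro a ha b hb hab
        have h1 := hbad.1 a ha
        have h2 := hbad.1 b hb
        apply Fin.ext
        simp only at hab
        omega
      · intro x hx hx1
        obtain ⟨a, ha, hax⟩ := mem_image.mp hx
        obtain ⟨b, hb, hbx⟩ := mem_image.mp hx1
        have h1 := hbad.1 a ha
        have h2 := hbad.1 b hb
        exact hbad.2 a ha b hb (by omega)
    · rintro U hU
      rw [mem_coe, mem_filter, mem_powersetCard] at hU
      obtain ⟨⟨hsub, hcard⟩, hsp⟩ := hU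
      have hval : ∀ u ∈ U, (u + 1) % n = u + 1 := by
        intro u hu
        have := mem_range.mp (hsub hu)
        exact Nat.mod_eq_of_lt (by omega)
      rw [mem_coe, mem_filter]
      refine ⟨mem_univ _, ?_, ?_, ?_⟩
      · rw [Finset.card_image_of_injOn, hcard]
        intro a ha b hb hab
        rw [Fin.ext_iff] at hab
        simp only [hval a ha, hval b hb] at hab
        omega
      · intro a ha
        obtain ⟨u, hu, rfl⟩ := mem_image.mp ha
        have := mem_range.mp (hsub hu)
        simp only [hval u hu]
        omega
      · intro a ha b hb
        obtain ⟨u, hu, rfl⟩ := mem_image.mp ha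
        obtain ⟨v, hv, rfl⟩ := mem_image.mp hb
        simp only [hval u hu, hval v hv]
        intro h
        have : v = u + 1 := by omega
        exact hsp u hu (this ▸ hv)
    · rintro T hT
      rw [mem_coe, mem_filter] at hT
      obtain ⟨-, hcard, hbad⟩ := hT
      beta_reduce
      rw [Finset.image_image]
      have heq : Set.EqOn ((fun u => (⟨(u + 1) % n, Nat.mod_lt _ hn0⟩ : Fin n)) ∘ (fun a : Fin n => (a : ℕ) - 1)) id ↑T := by
        intro a ha
        rw [Finset.mem_coe] at ha
        have h1 := hbad.1 a ha
        have h2 := a.isLt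
        simp only [Function.comp, id]
        apply Fin.ext
        simp only
        rw [show (a : ℕ) - 1 + 1 = (a : ℕ) by omega, Nat.mod_eq_of_lt h2]
      rw [Finset.image_congr heq, Finset.image_id]
    · rintro U hU
      rw [mem_coe, mem_filter, mem_powersetCard] at hU
      obtain ⟨⟨hsub, hcard⟩, hsp⟩ := hU
      beta_reduce
      rw [Finset.image_image]
      have heq : Set.EqOn ((fun a : Fin n => (a : ℕ) - 1) ∘ (fun u => (⟨(u + 1) % n, Nat.mod_lt _ hn0⟩ : Fin n))) id ↑U := by
        intro u hu
        rw [Finset.mem_coe] at hu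
        have := mem_range.mp (hsub hu)
        simp only [Function.comp, id]
        rw [Nat.mod_eq_of_lt (by omega)]; omega
      rw [Finset.image_congr heq, Finset.image_id]

lemma zsplit {V : Type*} [Fintype V] (G : SimpleGraph V) (i : ℕ) :
    G.zcount i + Nat.card {S : Finset V // S.card = i ∧ ¬ G.IsZeroForcingSet ↑S} =
      (Fintype.card V).choose i := by
  classical
  rw [SimpleGraph.zcount, Nat.card_eq_fintype_card, Nat.card_eq_fintype_card,
      Fintype.card_subtype, Fintype.card_subtype]
  have h1 : ∀ p : Finset V → Prop, ∀ _ : DecidablePred p,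
      filter (fun S : Finset V => S.card = i ∧ p S) univ
        = filter p (filter (fun S : Finset V => S.card = i) univ) := by
    intro p hp
    rw [filter_filter]
  rw [h1 _ inferInstance, h1 _ inferInstance,
    card_filter_add_card_filter_not, ← Fintype.card_finset_len,
    Fintype.card_subtype]

end Aux

/-- If `G` on `n` vertices has a Hamiltonian path, then
`z(G;i) ≤ C(n,i) − C(n−i−1,i)` for all `1 ≤ i ≤ n`, with equality for `G = P_n`. -/
theorem zcount_le_of_hamiltonian_path {V : Type*} [Fintype V] (G : SimpleGraph V)
    (n : ℕ) (hcard : Fintype.card V = n)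
    (ham : ∃ f : Fin n ≃ V, ∀ i : Fin n, ∀ h : (i : ℕ) + 1 < n,
      G.Adj (f i) (f ⟨(i : ℕ) + 1, h⟩)) :
    (∀ i, 1 ≤ i → i ≤ n → G.zcount i ≤ n.choose i - (n - i - 1).choose i) ∧
    (∀ i, 1 ≤ i → i ≤ n → (pathG n).zcount i = n.choose i - (n - i - 1).choose i) := by
  classical
  obtain ⟨f, hf⟩ := ham
  constructor
  · intro i h1 h2
    have hs := zsplit G i
    rw [hcard] at hs
    have hnc : Nat.card {S : Finset V // S.card = i ∧ ¬ G.IsZeroForcingSet ↑S}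
        = (Finset.univ.filter (fun S : Finset V => S.card = i ∧ ¬ G.IsZeroForcingSet ↑S)).card := by
      rw [Nat.card_eq_fintype_card, Fintype.card_subtype]
    rw [hnc] at hs
    have hineq : ((Finset.univ : Finset (Finset (Fin n))).filter
          (fun T => T.card = i ∧ Bad n T)).card
        ≤ (Finset.univ.filter (fun S : Finset V => S.card = i ∧ ¬ G.IsZeroForcingSet ↑S)).card := by
      apply Finset.card_le_card_of_injOn (fun T => T.image ⇑f)
      · intro T hT
        rw [Finset.mem_coe, Finset.mem_filter] at hT ⊢
        obtain ⟨-, hTc, hTb⟩ := hT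
        refine ⟨Finset.mem_univ _, ?_, ?_⟩
        · rw [Finset.card_image_of_injective _ f.injective, hTc]
        · exact bad_not_zfs G f hf T hTb (Finset.card_pos.mp (by omega))
      · intro T₁ h₁ T₂ h₂ h
        exact Finset.image_injective f.injective h
    rw [bad_card n i h1] at hineq
    omega
  · intro i h1 h2
    have hs := zsplit (pathG n) i
    rw [Fintype.card_fin] at hs
    have hnc : Nat.card {S : Finset (Fin n) // S.card = i ∧ ¬ (pathG n).IsZeroForcingSet ↑S}
        = (Finset.univ.filter
            (fun S : Finset (Fin n) => S.card = i ∧ ¬ (pathG n).IsZeroForcingSet ↑S)).card := by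
      rw [Nat.card_eq_fintype_card, Fintype.card_subtype]
    rw [hnc] at hs
    have hfe : Finset.univ.filter
          (fun S : Finset (Fin n) => S.card = i ∧ ¬ (pathG n).IsZeroForcingSet ↑S)
        = Finset.univ.filter (fun T : Finset (Fin n) => T.card = i ∧ Bad n T) := by
      ext S
      simp only [Finset.mem_filter, Finset.mem_univ, true_and]
      constructor
      · rintro ⟨hc, hz⟩
        refine ⟨hc, ?_⟩
        by_contra hnb
        exact hz (not_bad_zfs S (Finset.card_pos.mp (by omega)) hnb)
      · rintro ⟨hc, hb⟩
        refine ⟨hc, ?_⟩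
        have hadj : ∀ j : Fin n, ∀ h : (j : ℕ) + 1 < n,
            (pathG n).Adj ((Equiv.refl (Fin n)) j) ((Equiv.refl (Fin n)) ⟨(j : ℕ) + 1, h⟩) := by
          intro j hj
          rw [Equiv.refl_apply, Equiv.refl_apply, pathG_adj]
          left; simp
        have := bad_not_zfs (pathG n) (Equiv.refl (Fin n)) hadj S hb
          (Finset.card_pos.mp (by omega))
        rwa [show S.image ⇑(Equiv.refl (Fin n)) = S by simp] at this
    rw [hfe, bad_card n i h1] at hs
    have hle : (n - i - 1).choose i ≤ n.choose i := by omega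
    omega
end
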